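/- arXiv:2003.06166 — 7 statements merged into one kernel-verified Lean document; each statement's English description precedes it below -/
import Mathlib

section
/- Let G be a regular simple graph (with at least one edge). Then the interval coloring impropriety of G satisfies μ_int(G) = 1 if G is Class 1 (i.e., the chromatic index χ'(G) equals the maximum degree Δ(G)), and μ_int(G) = 2 if G is Class 2 (i.e., χ'(G) = Δ(G) + 1). -/
open SimpleGraph

/-- The set ("spectrum") of colors appearing on edges incident to vertex `v`
under the edge coloring `c`. -/
def SimpleGraph.colorSpectrum {V : Type*} (G : SimpleGraph V) (c : Sym2 V → ℕ) (v : V) :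
    Set ℕ :=
  {n | ∃ w, G.Adj v w ∧ c s(v, w) = n}

/-- A set of natural numbers is an interval of consecutive integers. -/
def IsIntervalSet (S : Set ℕ) : Prop :=
  ∀ a ∈ S, ∀ b ∈ S, ∀ x, a ≤ x → x ≤ b → x ∈ S

/-- `c` is a `k`-improper interval edge coloring of `G`: at most `k` edges with a common
endpoint share a color, and the colors at each vertex form an interval. -/
def SimpleGraph.IsImproperIntervalColoring {V : Type*} (G : SimpleGraph V)
    (c : Sym2 V → ℕ) (k : ℕ) : Prop :=
  (∀ v n, {w | G.Adj v w ∧ c s(v, w) = n}.ncard ≤ k) ∧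
    ∀ v, IsIntervalSet (G.colorSpectrum c v)

/-- The interval coloring impropriety of `G`: the least `k` such that `G` has a
`k`-improper interval edge coloring. -/
noncomputable def SimpleGraph.muInt {V : Type*} (G : SimpleGraph V) : ℕ :=
  sInf {k | ∃ c : Sym2 V → ℕ, G.IsImproperIntervalColoring c k}

/-- `c` is a proper edge coloring of `G`: distinct edges sharing an endpoint get
distinct colors. -/
def SimpleGraph.IsProperEdgeColoring {V : Type*} (G : SimpleGraph V) (c : Sym2 V → ℕ) : Prop :=
  ∀ ⦃v a b : V⦄, G.Adj v a → G.Adj v b → a ≠ b → c s(v, a) ≠ c s(v, b)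

/-- The chromatic index of `G`: the least number of colors in a proper edge coloring. -/
noncomputable def SimpleGraph.chromaticIndex {V : Type*} (G : SimpleGraph V) : ℕ :=
  sInf {n | ∃ c : Sym2 V → ℕ, G.IsProperEdgeColoring c ∧ ∀ e ∈ G.edgeSet, c e < n}

section Aux

variable {V : Type*} [Fintype V] {G : SimpleGraph V} [DecidableRel G.Adj]

lemma aux_mem_spec {c : Sym2 V → ℕ} {v : V} {n : ℕ} :
    n ∈ G.colorSpectrum c v ↔ ∃ w, G.Adj v w ∧ c s(v, w) = n := Iff.rfl

lemma aux_fiber_le_one {c : Sym2 V → ℕ} (hc : G.IsProperEdgeColoring c) (v : V) (n : ℕ) :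
    {w | G.Adj v w ∧ c s(v, w) = n}.ncard ≤ 1 := by
  rw [Set.ncard_le_one (Set.toFinite _)]
  intro a ha b hb
  by_contra hne
  exact hc ha.1 hb.1 hne (ha.2.trans hb.2.symm)

lemma aux_injOn {c : Sym2 V → ℕ} (hc : G.IsProperEdgeColoring c) (v : V) :
    Set.InjOn (fun w => c s(v, w)) ↑(G.neighborFinset v) := by
  intro a ha b hb hab
  by_contra hne
  exact hc (by simpa using ha) (by simpa using hb) hne hab

lemma aux_image_card {c : Sym2 V → ℕ} {d : ℕ} (hc : G.IsProperEdgeColoring c)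
    (hreg : G.IsRegularOfDegree d) (v : V) :
    ((G.neighborFinset v).image (fun w => c s(v, w))).card = d := by
  rw [Finset.card_image_of_injOn (aux_injOn hc v), G.card_neighborFinset_eq_degree, hreg v]

/-- In the Class 1 case, every color `< d` appears at every vertex. -/
lemma aux_class1_spec {c : Sym2 V → ℕ} {d : ℕ} (hc : G.IsProperEdgeColoring c)
    (hb : ∀ e ∈ G.edgeSet, c e < d) (hreg : G.IsRegularOfDegree d) (v : V) {n : ℕ}
    (hn : n < d) : n ∈ G.colorSpectrum c v := by
  have himg : (G.neighborFinset v).image (fun w => c s(v, w)) = Finset.range d := by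
    apply Finset.eq_of_subset_of_card_le
    · intro x hx
      obtain ⟨w, hw, rfl⟩ := Finset.mem_image.1 hx
      rw [G.mem_neighborFinset] at hw
      exact Finset.mem_range.2 (hb _ (G.mem_edgeSet.2 hw))
    · rw [Finset.card_range, aux_image_card hc hreg v]
  have : n ∈ (G.neighborFinset v).image (fun w => c s(v, w)) := by
    rw [himg]; exact Finset.mem_range.2 hn
  obtain ⟨w, hw, hwc⟩ := Finset.mem_image.1 this
  exact ⟨w, (G.mem_neighborFinset v w).1 hw, hwc⟩

/-- In the Class 2 case (colors `< d+1`), each vertex misses at most one color of `{0,…,d}`. -/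
lemma aux_miss_at_most_one {c : Sym2 V → ℕ} {d : ℕ} (hc : G.IsProperEdgeColoring c)
    (hb : ∀ e ∈ G.edgeSet, c e < d + 1) (hreg : G.IsRegularOfDegree d) (v : V) {p q : ℕ}
    (hp : p ≤ d) (hq : q ≤ d) (hpq : p ≠ q) :
    p ∈ G.colorSpectrum c v ∨ q ∈ G.colorSpectrum c v := by
  by_contra hcon
  push_neg at hcon
  obtain ⟨h1, h2⟩ := hcon
  have hsub : (G.neighborFinset v).image (fun w => c s(v, w)) ⊆
      Finset.range (d + 1) \ {p, q} := by
    intro x hx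
    obtain ⟨w, hw, rfl⟩ := Finset.mem_image.1 hx
    rw [G.mem_neighborFinset] at hw
    refine Finset.mem_sdiff.2 ⟨Finset.mem_range.2 (hb _ (G.mem_edgeSet.2 hw)), ?_⟩
    intro hmem
    rcases Finset.mem_insert.1 hmem with h | h
    · exact h1 ⟨w, hw, h⟩
    · exact h2 ⟨w, hw, Finset.mem_singleton.1 h⟩
  have hcard := Finset.card_le_card hsub
  rw [aux_image_card hc hreg v, Finset.card_sdiff_of_subset (by
    intro x hx
    rcases Finset.mem_insert.1 hx with h | h
    · exact Finset.mem_range.2 (by omega)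
    · exact Finset.mem_range.2 (by rw [Finset.mem_singleton.1 h]; omega))] at hcard
  rw [Finset.card_pair hpq, Finset.card_range] at hcard
  omega

/-- With a proper interval coloring, two colors at a common vertex differ by less than `d`. -/
lemma aux_colors_close {c : Sym2 V → ℕ} {d : ℕ} (hc : G.IsProperEdgeColoring c)
    (hint : ∀ v, IsIntervalSet (G.colorSpectrum c v)) (hreg : G.IsRegularOfDegree d)
    {v w1 w2 : V} (h1 : G.Adj v w1) (h2 : G.Adj v w2) :
    c s(v, w2) < c s(v, w1) + d := by
  by_contra hcon
  push_neg at hcon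
  set a := c s(v, w1) with ha
  set b := c s(v, w2) with hbb
  have hIcc : Finset.Icc a b ⊆ (G.neighborFinset v).image (fun w => c s(v, w)) := by
    intro x hx
    rw [Finset.mem_Icc] at hx
    obtain ⟨w, hw, hwc⟩ := hint v a ⟨w1, h1, rfl⟩ b ⟨w2, h2, rfl⟩ x hx.1 hx.2
    exact Finset.mem_image.2 ⟨w, (G.mem_neighborFinset v w).2 hw, hwc⟩
  have hcard := Finset.card_le_card hIcc
  rw [aux_image_card hc hreg v, Nat.card_Icc] at hcard
  omega

end Aux

/-- For a regular graph with at least one edge, the impropriety is 1 if the graph is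
Class 1 and 2 if it is Class 2. -/
theorem statement0 {V : Type*} [Fintype V] (G : SimpleGraph V) [DecidableRel G.Adj]
    (d : ℕ) (hreg : G.IsRegularOfDegree d) (hE : G.edgeSet.Nonempty) :
    (G.chromaticIndex = G.maxDegree → G.muInt = 1) ∧
    (G.chromaticIndex = G.maxDegree + 1 → G.muInt = 2) := by
  classical
  -- basic facts
  obtain ⟨v0, w0, hvw⟩ : ∃ v w, G.Adj v w := by
    obtain ⟨e, he⟩ := hE
    induction e using Sym2.ind with
    | _ v w => exact ⟨v, w, he⟩
  have hd1 : 1 ≤ d := by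
    have h0 : w0 ∈ G.neighborFinset v0 := (G.mem_neighborFinset v0 w0).2 hvw
    have := Finset.card_pos.2 ⟨w0, h0⟩
    rw [G.card_neighborFinset_eq_degree, hreg v0] at this
    exact this
  have hmax : G.maxDegree = d :=
    le_antisymm (G.maxDegree_le_of_forall_degree_le d fun u => (hreg u).le)
      ((hreg v0) ▸ G.degree_le_maxDegree v0)
  set S : Set ℕ := {k | ∃ c : Sym2 V → ℕ, G.IsImproperIntervalColoring c k} with hS
  have hmu : G.muInt = sInf S := rfl
  -- 0 is never in S
  have h0S : 0 ∉ S := by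
    rintro ⟨c, hfib, -⟩
    have hne : {w | G.Adj v0 w ∧ c s(v0, w) = c s(v0, w0)}.Nonempty := ⟨w0, hvw, rfl⟩
    have := (Set.ncard_pos (Set.toFinite _)).2 hne
    have := hfib v0 (c s(v0, w0))
    omega
  constructor
  · -- Class 1
    intro hchr
    rw [hmax] at hchr
    have hpos : 0 < G.chromaticIndex := by omega
    obtain ⟨c, hcp, hcb⟩ := Nat.sInf_mem (Nat.nonempty_of_pos_sInf hpos)
    replace hcb : ∀ e ∈ G.edgeSet, c e < d := fun e he => by
      have h := hcb e he
      change c e < G.chromaticIndex at h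
      omega
    have h1S : 1 ∈ S := by
      refine ⟨c, fun v n => aux_fiber_le_one hcp v n, fun v a ha b hb x hax hxb => ?_⟩
      obtain ⟨w, hw, hwc⟩ := hb
      have hbd : b < d := hwc ▸ hcb _ (G.mem_edgeSet.2 hw)
      exact aux_class1_spec hcp hcb hreg v (lt_of_le_of_lt hxb hbd)
    rw [hmu]
    have hle : sInf S ≤ 1 := Nat.sInf_le h1S
    have hmem : sInf S ∈ S := Nat.sInf_mem ⟨1, h1S⟩
    have : sInf S ≠ 0 := fun h => h0S (h ▸ hmem)
    omega
  · -- Class 2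
    intro hchr
    rw [hmax] at hchr
    have hpos : 0 < G.chromaticIndex := by omega
    obtain ⟨c, hcp, hcb⟩ := Nat.sInf_mem (Nat.nonempty_of_pos_sInf hpos)
    replace hcb : ∀ e ∈ G.edgeSet, c e < d + 1 := fun e he => by
      have h := hcb e he
      change c e < G.chromaticIndex at h
      omega
    -- the halved coloring is a 2-improper interval coloring
    have h2S : 2 ∈ S := by
      refine ⟨fun e => c e / 2, fun v n => ?_, fun v a ha b hb x hax hxb => ?_⟩
      · have hsub : {w | G.Adj v w ∧ c s(v, w) / 2 = n} ⊆
            {w | G.Adj v w ∧ c s(v, w) = 2 * n} ∪ {w | G.Adj v w ∧ c s(v, w) = 2 * n + 1} := by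
          intro w ⟨hw, hwc⟩
          rcases Nat.lt_or_ge (c s(v, w)) (2 * n + 1) with h | h
          · exact Or.inl ⟨hw, by omega⟩
          · exact Or.inr ⟨hw, by omega⟩
        calc {w | G.Adj v w ∧ c s(v, w) / 2 = n}.ncard
            ≤ ({w | G.Adj v w ∧ c s(v, w) = 2 * n} ∪
              {w | G.Adj v w ∧ c s(v, w) = 2 * n + 1}).ncard :=
              Set.ncard_le_ncard hsub (Set.toFinite _)
          _ ≤ {w | G.Adj v w ∧ c s(v, w) = 2 * n}.ncard +
              {w | G.Adj v w ∧ c s(v, w) = 2 * n + 1}.ncard := Set.ncard_union_le _ _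
          _ ≤ 2 := by
              have := aux_fiber_le_one hcp v (2 * n)
              have := aux_fiber_le_one hcp v (2 * n + 1)
              omega
      · rcases eq_or_lt_of_le hxb with rfl | hxb'
        · exact hb
        obtain ⟨w, hw, hwc⟩ := hb
        change c s(v, w) / 2 = b at hwc
        have hcw : c s(v, w) < d + 1 := hcb _ (G.mem_edgeSet.2 hw)
        have h2x : 2 * x ≤ d ∧ 2 * x + 1 ≤ d := by omega
        rcases aux_miss_at_most_one hcp hcb hreg v (p := 2 * x) (q := 2 * x + 1)
            h2x.1 h2x.2 (by omega) with ⟨w', hw', hwc'⟩ | ⟨w', hw', hwc'⟩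
        · exact ⟨w', hw', by show c s(v, w') / 2 = x; omega⟩
        · exact ⟨w', hw', by show c s(v, w') / 2 = x; omega⟩
    -- 1 is not in S
    have h1S : 1 ∉ S := by
      rintro ⟨c1, hfib, hint⟩
      have hprop : G.IsProperEdgeColoring c1 := by
        intro v a b hva hvb hab heq
        have hsub : {a, b} ⊆ {w | G.Adj v w ∧ c1 s(v, w) = c1 s(v, a)} := by
          rintro x hx
          rcases hx with rfl | hx
          · exact ⟨hva, rfl⟩
          · rw [Set.mem_singleton_iff] at hx
            subst hx
            exact ⟨hvb, heq.symm⟩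
        have := Set.ncard_le_ncard hsub (Set.toFinite _)
        rw [Set.ncard_pair hab] at this
        have := hfib v (c1 s(v, a))
        omega
      -- the coloring mod d is a proper coloring with colors < d
      have hmod : d ∈ {n | ∃ c : Sym2 V → ℕ, G.IsProperEdgeColoring c ∧
          ∀ e ∈ G.edgeSet, c e < n} := by
        refine ⟨fun e => c1 e % d, ?_, fun e _ => Nat.mod_lt _ (by omega)⟩
        intro v a b hva hvb hab heq
        change c1 s(v, a) % d = c1 s(v, b) % d at heq
        have hne : c1 s(v, a) ≠ c1 s(v, b) := hprop hva hvb hab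
        have hc1 := aux_colors_close hprop hint hreg hva hvb
        have hc2 := aux_colors_close hprop hint hreg hvb hva
        rcases Nat.lt_or_ge (c1 s(v, a)) (c1 s(v, b)) with h | h
        · have : d ∣ c1 s(v, b) - c1 s(v, a) := (Nat.modEq_iff_dvd' h.le).1 heq
          have := Nat.le_of_dvd (by omega) this
          omega
        · have h' : c1 s(v, b) < c1 s(v, a) := by omega
          have : d ∣ c1 s(v, a) - c1 s(v, b) := (Nat.modEq_iff_dvd' h'.le).1 heq.symm
          have := Nat.le_of_dvd (by omega) this
          omega
      have hle' : G.chromaticIndex ≤ d := Nat.sInf_le hmod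
      omega
    rw [hmu]
    have hle : sInf S ≤ 2 := Nat.sInf_le h2S
    have hmem : sInf S ∈ S := Nat.sInf_mem ⟨2, h2S⟩
    have hne0 : sInf S ≠ 0 := fun h => h0S (h ▸ hmem)
    have hne1 : sInf S ≠ 1 := fun h => h1S (h ▸ hmem)
    omega
end

section
/- For all positive integers a, b, c, the graph S_{a,b,c} satisfies μ_int(S_{a,b,c}) ≤ 2. -/
open SimpleGraph

/-- The vertex set of the graph `S_{a,b,c}`: vertices `u_0,…,u_3`, `v_1,v_2,v_3`
(indexed here by `Fin 3` as `v 0, v 1, v 2`), and `x_1,…,x_a`, `y_1,…,y_b`, `z_1,…,z_c`. -/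
inductive SVert (a b c : ℕ) : Type
  | u : Fin 4 → SVert a b c
  | v : Fin 3 → SVert a b c
  | x : Fin a → SVert a b c
  | y : Fin b → SVert a b c
  | z : Fin c → SVert a b c
  deriving DecidableEq, Fintype

/-- The graph `S_{a,b,c}` with edges `u_1v_1, v_1u_2, u_2v_2, v_2u_3, u_3v_3, v_3u_1`
together with `u_0x_i, u_1x_i`, `u_0y_j, u_2y_j` and `u_0z_k, u_3z_k`. -/
def Sgraph (a b c : ℕ) : SimpleGraph (SVert a b c) :=
  SimpleGraph.fromRel (fun p q =>
    (p = .u 1 ∧ q = .v 0) ∨ (p = .v 0 ∧ q = .u 2) ∨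
    (p = .u 2 ∧ q = .v 1) ∨ (p = .v 1 ∧ q = .u 3) ∨
    (p = .u 3 ∧ q = .v 2) ∨ (p = .v 2 ∧ q = .u 1) ∨
    (∃ i, p = .u 0 ∧ q = .x i) ∨ (∃ i, p = .u 1 ∧ q = .x i) ∨
    (∃ j, p = .u 0 ∧ q = .y j) ∨ (∃ j, p = .u 2 ∧ q = .y j) ∨
    (∃ l, p = .u 0 ∧ q = .z l) ∨ (∃ l, p = .u 3 ∧ q = .z l))

/-- Directed color table for a 2-improper interval coloring of `Sgraph`. -/
def Saux (a b c : ℕ) : SVert a b c → SVert a b c → ℕ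
  | .u 1, .v 0 => 1
  | .v 0, .u 2 => 1
  | .u 2, .v 1 => min a b + 1
  | .v 1, .u 3 => min a b + 1
  | .u 3, .v 2 => min a b + 2
  | .v 2, .u 1 => min (min a b + 2) (a + 1)
  | .u 0, .x i => i.1 + 1
  | .u 1, .x i => i.1 + 1
  | .u 0, .y j => j.1 + 1
  | .u 2, .y j => j.1 + 1
  | .u 0, .z k => min a b + k.1 + 1
  | .u 3, .z k => min a b + k.1 + 1
  | _, _ => 0

/-- The 2-improper interval edge coloring of `Sgraph a b c`. -/
def Scol (a b c : ℕ) : Sym2 (SVert a b c) → ℕ :=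
  Sym2.lift ⟨fun p q => max (Saux a b c p q) (Saux a b c q p), fun _ _ => max_comm _ _⟩

section Lemmas

variable {a b c : ℕ}

lemma adj_u0 (w : SVert a b c) : (Sgraph a b c).Adj (.u 0) w ↔
    (∃ i, w = .x i) ∨ (∃ j, w = .y j) ∨ (∃ k, w = .z k) := by
  simp [Sgraph, SimpleGraph.fromRel_adj]; aesop

lemma adj_u1 (w : SVert a b c) : (Sgraph a b c).Adj (.u 1) w ↔
    w = .v 0 ∨ w = .v 2 ∨ (∃ i, w = .x i) := by
  simp [Sgraph, SimpleGraph.fromRel_adj]; aesop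

lemma adj_u2 (w : SVert a b c) : (Sgraph a b c).Adj (.u 2) w ↔
    w = .v 0 ∨ w = .v 1 ∨ (∃ j, w = .y j) := by
  simp [Sgraph, SimpleGraph.fromRel_adj]; aesop

lemma adj_u3 (w : SVert a b c) : (Sgraph a b c).Adj (.u 3) w ↔
    w = .v 1 ∨ w = .v 2 ∨ (∃ k, w = .z k) := by
  simp [Sgraph, SimpleGraph.fromRel_adj]; aesop

lemma adj_v0 (w : SVert a b c) : (Sgraph a b c).Adj (.v 0) w ↔
    w = .u 1 ∨ w = .u 2 := by
  simp [Sgraph, SimpleGraph.fromRel_adj]; aesop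

lemma adj_v1 (w : SVert a b c) : (Sgraph a b c).Adj (.v 1) w ↔
    w = .u 2 ∨ w = .u 3 := by
  simp [Sgraph, SimpleGraph.fromRel_adj]; aesop

lemma adj_v2 (w : SVert a b c) : (Sgraph a b c).Adj (.v 2) w ↔
    w = .u 1 ∨ w = .u 3 := by
  simp [Sgraph, SimpleGraph.fromRel_adj]; aesop

lemma adj_x (i : Fin a) (w : SVert a b c) : (Sgraph a b c).Adj (.x i) w ↔
    w = .u 0 ∨ w = .u 1 := by
  simp [Sgraph, SimpleGraph.fromRel_adj]; aesop

lemma adj_y (j : Fin b) (w : SVert a b c) : (Sgraph a b c).Adj (.y j) w ↔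
    w = .u 0 ∨ w = .u 2 := by
  simp [Sgraph, SimpleGraph.fromRel_adj]; aesop

lemma adj_z (k : Fin c) (w : SVert a b c) : (Sgraph a b c).Adj (.z k) w ↔
    w = .u 0 ∨ w = .u 3 := by
  simp [Sgraph, SimpleGraph.fromRel_adj]; aesop

lemma scol_u0x (i : Fin a) : Scol a b c s(.u 0, .x i) = i.1 + 1 := rfl
lemma scol_u0y (j : Fin b) : Scol a b c s(.u 0, .y j) = j.1 + 1 := rfl
lemma scol_u0z (k : Fin c) : Scol a b c s(.u 0, .z k) = min a b + k.1 + 1 := rfl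
lemma scol_u1x (i : Fin a) : Scol a b c s(.u 1, .x i) = i.1 + 1 := rfl
lemma scol_u2y (j : Fin b) : Scol a b c s(.u 2, .y j) = j.1 + 1 := rfl
lemma scol_u3z (k : Fin c) : Scol a b c s(.u 3, .z k) = min a b + k.1 + 1 := rfl
lemma scol_u1v0 : Scol a b c s(.u 1, .v 0) = 1 := rfl
lemma scol_u1v2 : Scol a b c s(.u 1, .v 2) = min (min a b + 2) (a + 1) := by
  have h : Scol a b c s(.u 1, .v 2) = max 0 (min (min a b + 2) (a + 1)) := rfl
  rw [h]; exact Nat.zero_max _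
lemma scol_u2v0 : Scol a b c s(.u 2, .v 0) = 1 := rfl
lemma scol_u2v1 : Scol a b c s(.u 2, .v 1) = min a b + 1 := rfl
lemma scol_u3v1 : Scol a b c s(.u 3, .v 1) = min a b + 1 := rfl
lemma scol_u3v2 : Scol a b c s(.u 3, .v 2) = min a b + 2 := rfl
lemma scol_v0u1 : Scol a b c s(.v 0, .u 1) = 1 := rfl
lemma scol_v0u2 : Scol a b c s(.v 0, .u 2) = 1 := rfl
lemma scol_v1u2 : Scol a b c s(.v 1, .u 2) = min a b + 1 := rfl
lemma scol_v1u3 : Scol a b c s(.v 1, .u 3) = min a b + 1 := rfl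
lemma scol_v2u1 : Scol a b c s(.v 2, .u 1) = min (min a b + 2) (a + 1) := by
  have h : Scol a b c s(.v 2, .u 1) = max (min (min a b + 2) (a + 1)) 0 := rfl
  rw [h]; exact Nat.max_zero _
lemma scol_v2u3 : Scol a b c s(.v 2, .u 3) = min a b + 2 := rfl
lemma scol_xu0 (i : Fin a) : Scol a b c s(.x i, .u 0) = i.1 + 1 := rfl
lemma scol_xu1 (i : Fin a) : Scol a b c s(.x i, .u 1) = i.1 + 1 := rfl
lemma scol_yu0 (j : Fin b) : Scol a b c s(.y j, .u 0) = j.1 + 1 := rfl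
lemma scol_yu2 (j : Fin b) : Scol a b c s(.y j, .u 2) = j.1 + 1 := rfl
lemma scol_zu0 (k : Fin c) : Scol a b c s(.z k, .u 0) = min a b + k.1 + 1 := rfl
lemma scol_zu3 (k : Fin c) : Scol a b c s(.z k, .u 3) = min a b + k.1 + 1 := rfl

lemma isIntervalSet_Icc (lo hi : ℕ) : IsIntervalSet (Set.Icc lo hi) := by
  intro p hp q hq x h1 h2
  simp only [Set.mem_Icc] at *
  omega

end Lemmas
section Main

variable {a b c : ℕ}

lemma mult_u0 (ha : 0 < a) (hb : 0 < b) (hc : 0 < c) (n : ℕ) :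
    {w | (Sgraph a b c).Adj (.u 0) w ∧ Scol a b c s(.u 0, w) = n}.ncard ≤ 2 := by
  by_contra hcon
  push_neg at hcon
  rw [Set.two_lt_ncard_iff (Set.toFinite _)] at hcon
  obtain ⟨w1, w2, w3, hw1, hw2, hw3, h12, h13, h23⟩ := hcon
  simp only [Set.mem_setOf_eq] at hw1 hw2 hw3
  have key : ∀ w : SVert a b c,
      (Sgraph a b c).Adj (.u 0) w ∧ Scol a b c s(.u 0, w) = n →
      (∃ i : Fin a, w = .x i ∧ i.1 + 1 = n ∧ i.1 < a) ∨
      (∃ j : Fin b, w = .y j ∧ j.1 + 1 = n ∧ j.1 < b) ∨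
      (∃ k : Fin c, w = .z k ∧ min a b + k.1 + 1 = n ∧ k.1 < c) := by
    rintro w ⟨hadj, hcol⟩
    rw [adj_u0] at hadj
    rcases hadj with ⟨i, rfl⟩ | ⟨j, rfl⟩ | ⟨k, rfl⟩
    · rw [scol_u0x] at hcol; exact Or.inl ⟨i, rfl, hcol, i.2⟩
    · rw [scol_u0y] at hcol; exact Or.inr (Or.inl ⟨j, rfl, hcol, j.2⟩)
    · rw [scol_u0z] at hcol; exact Or.inr (Or.inr ⟨k, rfl, hcol, k.2⟩)
  rcases key w1 hw1 with ⟨i1, rfl, e1, l1⟩ | ⟨j1, rfl, e1, l1⟩ | ⟨k1, rfl, e1, l1⟩ <;>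
    rcases key w2 hw2 with ⟨i2, rfl, e2, l2⟩ | ⟨j2, rfl, e2, l2⟩ | ⟨k2, rfl, e2, l2⟩ <;>
    rcases key w3 hw3 with ⟨i3, rfl, e3, l3⟩ | ⟨j3, rfl, e3, l3⟩ | ⟨k3, rfl, e3, l3⟩ <;>
    first
      | exact h12 (congrArg _ (Fin.ext (by omega)))
      | exact h13 (congrArg _ (Fin.ext (by omega)))
      | exact h23 (congrArg _ (Fin.ext (by omega)))
      | omega

lemma mult_u1 (ha : 0 < a) (hb : 0 < b) (hc : 0 < c) (n : ℕ) :
    {w | (Sgraph a b c).Adj (.u 1) w ∧ Scol a b c s(.u 1, w) = n}.ncard ≤ 2 := by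
  by_contra hcon
  push_neg at hcon
  rw [Set.two_lt_ncard_iff (Set.toFinite _)] at hcon
  obtain ⟨w1, w2, w3, hw1, hw2, hw3, h12, h13, h23⟩ := hcon
  simp only [Set.mem_setOf_eq] at hw1 hw2 hw3
  have key : ∀ w : SVert a b c,
      (Sgraph a b c).Adj (.u 1) w ∧ Scol a b c s(.u 1, w) = n →
      (w = .v 0 ∧ 1 = n) ∨ (w = .v 2 ∧ min (min a b + 2) (a + 1) = n) ∨
      (∃ i : Fin a, w = .x i ∧ i.1 + 1 = n ∧ i.1 < a) := by
    rintro w ⟨hadj, hcol⟩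
    rw [adj_u1] at hadj
    rcases hadj with rfl | rfl | ⟨i, rfl⟩
    · rw [scol_u1v0] at hcol; exact Or.inl ⟨rfl, hcol⟩
    · rw [scol_u1v2] at hcol; exact Or.inr (Or.inl ⟨rfl, hcol⟩)
    · rw [scol_u1x] at hcol; exact Or.inr (Or.inr ⟨i, rfl, hcol, i.2⟩)
  rcases key w1 hw1 with ⟨rfl, e1⟩ | ⟨rfl, e1⟩ | ⟨i1, rfl, e1, l1⟩ <;>
    rcases key w2 hw2 with ⟨rfl, e2⟩ | ⟨rfl, e2⟩ | ⟨i2, rfl, e2, l2⟩ <;>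
    rcases key w3 hw3 with ⟨rfl, e3⟩ | ⟨rfl, e3⟩ | ⟨i3, rfl, e3, l3⟩ <;>
    first
      | exact h12 rfl
      | exact h13 rfl
      | exact h23 rfl
      | exact h12 (congrArg _ (Fin.ext (by omega)))
      | exact h13 (congrArg _ (Fin.ext (by omega)))
      | exact h23 (congrArg _ (Fin.ext (by omega)))
      | omega

lemma mult_u2 (ha : 0 < a) (hb : 0 < b) (hc : 0 < c) (n : ℕ) :
    {w | (Sgraph a b c).Adj (.u 2) w ∧ Scol a b c s(.u 2, w) = n}.ncard ≤ 2 := by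
  by_contra hcon
  push_neg at hcon
  rw [Set.two_lt_ncard_iff (Set.toFinite _)] at hcon
  obtain ⟨w1, w2, w3, hw1, hw2, hw3, h12, h13, h23⟩ := hcon
  simp only [Set.mem_setOf_eq] at hw1 hw2 hw3
  have key : ∀ w : SVert a b c,
      (Sgraph a b c).Adj (.u 2) w ∧ Scol a b c s(.u 2, w) = n →
      (w = .v 0 ∧ 1 = n) ∨ (w = .v 1 ∧ min a b + 1 = n) ∨
      (∃ j : Fin b, w = .y j ∧ j.1 + 1 = n ∧ j.1 < b) := by
    rintro w ⟨hadj, hcol⟩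
    rw [adj_u2] at hadj
    rcases hadj with rfl | rfl | ⟨j, rfl⟩
    · rw [scol_u2v0] at hcol; exact Or.inl ⟨rfl, hcol⟩
    · rw [scol_u2v1] at hcol; exact Or.inr (Or.inl ⟨rfl, hcol⟩)
    · rw [scol_u2y] at hcol; exact Or.inr (Or.inr ⟨j, rfl, hcol, j.2⟩)
  rcases key w1 hw1 with ⟨rfl, e1⟩ | ⟨rfl, e1⟩ | ⟨j1, rfl, e1, l1⟩ <;>
    rcases key w2 hw2 with ⟨rfl, e2⟩ | ⟨rfl, e2⟩ | ⟨j2, rfl, e2, l2⟩ <;>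
    rcases key w3 hw3 with ⟨rfl, e3⟩ | ⟨rfl, e3⟩ | ⟨j3, rfl, e3, l3⟩ <;>
    first
      | exact h12 rfl
      | exact h13 rfl
      | exact h23 rfl
      | exact h12 (congrArg _ (Fin.ext (by omega)))
      | exact h13 (congrArg _ (Fin.ext (by omega)))
      | exact h23 (congrArg _ (Fin.ext (by omega)))
      | omega

lemma mult_u3 (ha : 0 < a) (hb : 0 < b) (hc : 0 < c) (n : ℕ) :
    {w | (Sgraph a b c).Adj (.u 3) w ∧ Scol a b c s(.u 3, w) = n}.ncard ≤ 2 := by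
  by_contra hcon
  push_neg at hcon
  rw [Set.two_lt_ncard_iff (Set.toFinite _)] at hcon
  obtain ⟨w1, w2, w3, hw1, hw2, hw3, h12, h13, h23⟩ := hcon
  simp only [Set.mem_setOf_eq] at hw1 hw2 hw3
  have key : ∀ w : SVert a b c,
      (Sgraph a b c).Adj (.u 3) w ∧ Scol a b c s(.u 3, w) = n →
      (w = .v 1 ∧ min a b + 1 = n) ∨ (w = .v 2 ∧ min a b + 2 = n) ∨
      (∃ k : Fin c, w = .z k ∧ min a b + k.1 + 1 = n ∧ k.1 < c) := by
    rintro w ⟨hadj, hcol⟩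
    rw [adj_u3] at hadj
    rcases hadj with rfl | rfl | ⟨k, rfl⟩
    · rw [scol_u3v1] at hcol; exact Or.inl ⟨rfl, hcol⟩
    · rw [scol_u3v2] at hcol; exact Or.inr (Or.inl ⟨rfl, hcol⟩)
    · rw [scol_u3z] at hcol; exact Or.inr (Or.inr ⟨k, rfl, hcol, k.2⟩)
  rcases key w1 hw1 with ⟨rfl, e1⟩ | ⟨rfl, e1⟩ | ⟨k1, rfl, e1, l1⟩ <;>
    rcases key w2 hw2 with ⟨rfl, e2⟩ | ⟨rfl, e2⟩ | ⟨k2, rfl, e2, l2⟩ <;>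
    rcases key w3 hw3 with ⟨rfl, e3⟩ | ⟨rfl, e3⟩ | ⟨k3, rfl, e3, l3⟩ <;>
    first
      | exact h12 rfl
      | exact h13 rfl
      | exact h23 rfl
      | exact h12 (congrArg _ (Fin.ext (by omega)))
      | exact h13 (congrArg _ (Fin.ext (by omega)))
      | exact h23 (congrArg _ (Fin.ext (by omega)))
      | omega

lemma mult_pair {p q : SVert a b c} {S : Set (SVert a b c)}
    (h : ∀ w ∈ S, w = p ∨ w = q) : S.ncard ≤ 2 := by
  by_contra hcon
  push_neg at hcon
  rw [Set.two_lt_ncard_iff (Set.toFinite _)] at hcon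
  obtain ⟨w1, w2, w3, hw1, hw2, hw3, h12, h13, h23⟩ := hcon
  rcases h w1 hw1 with rfl | rfl <;> rcases h w2 hw2 with rfl | rfl <;>
    rcases h w3 hw3 with rfl | rfl <;>
    first
      | exact h12 rfl
      | exact h13 rfl
      | exact h23 rfl

end Main
section Spec

variable {a b c : ℕ}

lemma spec_u0 (ha : 0 < a) (hb : 0 < b) (hc : 0 < c) :
    (Sgraph a b c).colorSpectrum (Scol a b c) (.u 0) =
      Set.Icc 1 (max (max a b) (min a b + c)) := by
  ext n
  simp only [SimpleGraph.colorSpectrum, Set.mem_setOf_eq, Set.mem_Icc]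
  constructor
  · rintro ⟨w, hadj, hcol⟩
    rw [adj_u0] at hadj
    rcases hadj with ⟨i, rfl⟩ | ⟨j, rfl⟩ | ⟨k, rfl⟩
    · rw [scol_u0x] at hcol; have := i.2; omega
    · rw [scol_u0y] at hcol; have := j.2; omega
    · rw [scol_u0z] at hcol; have := k.2; omega
  · rintro ⟨h1, h2⟩
    by_cases hna : n ≤ a
    · exact ⟨.x ⟨n - 1, by omega⟩, (adj_u0 _).2 (Or.inl ⟨_, rfl⟩),
        by rw [scol_u0x]; simp; omega⟩
    · by_cases hnb : n ≤ b
      · exact ⟨.y ⟨n - 1, by omega⟩, (adj_u0 _).2 (Or.inr (Or.inl ⟨_, rfl⟩)),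
          by rw [scol_u0y]; simp; omega⟩
      · exact ⟨.z ⟨n - min a b - 1, by omega⟩, (adj_u0 _).2 (Or.inr (Or.inr ⟨_, rfl⟩)),
          by rw [scol_u0z]; simp; omega⟩

lemma spec_u1 (ha : 0 < a) (hb : 0 < b) (hc : 0 < c) :
    (Sgraph a b c).colorSpectrum (Scol a b c) (.u 1) =
      Set.Icc 1 (max a (min (min a b + 2) (a + 1))) := by
  ext n
  simp only [SimpleGraph.colorSpectrum, Set.mem_setOf_eq, Set.mem_Icc]
  constructor
  · rintro ⟨w, hadj, hcol⟩
    rw [adj_u1] at hadj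
    rcases hadj with rfl | rfl | ⟨i, rfl⟩
    · rw [scol_u1v0] at hcol; omega
    · rw [scol_u1v2] at hcol; omega
    · rw [scol_u1x] at hcol; have := i.2; omega
  · rintro ⟨h1, h2⟩
    by_cases hna : n ≤ a
    · exact ⟨.x ⟨n - 1, by omega⟩, (adj_u1 _).2 (Or.inr (Or.inr ⟨_, rfl⟩)),
        by rw [scol_u1x]; simp; omega⟩
    · exact ⟨.v 2, (adj_u1 _).2 (Or.inr (Or.inl rfl)), by rw [scol_u1v2]; omega⟩

lemma spec_u2 (ha : 0 < a) (hb : 0 < b) (hc : 0 < c) :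
    (Sgraph a b c).colorSpectrum (Scol a b c) (.u 2) =
      Set.Icc 1 (max b (min a b + 1)) := by
  ext n
  simp only [SimpleGraph.colorSpectrum, Set.mem_setOf_eq, Set.mem_Icc]
  constructor
  · rintro ⟨w, hadj, hcol⟩
    rw [adj_u2] at hadj
    rcases hadj with rfl | rfl | ⟨j, rfl⟩
    · rw [scol_u2v0] at hcol; omega
    · rw [scol_u2v1] at hcol; omega
    · rw [scol_u2y] at hcol; have := j.2; omega
  · rintro ⟨h1, h2⟩
    by_cases hnb : n ≤ b
    · exact ⟨.y ⟨n - 1, by omega⟩, (adj_u2 _).2 (Or.inr (Or.inr ⟨_, rfl⟩)),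
        by rw [scol_u2y]; simp; omega⟩
    · exact ⟨.v 1, (adj_u2 _).2 (Or.inr (Or.inl rfl)), by rw [scol_u2v1]; omega⟩

lemma spec_u3 (ha : 0 < a) (hb : 0 < b) (hc : 0 < c) :
    (Sgraph a b c).colorSpectrum (Scol a b c) (.u 3) =
      Set.Icc (min a b + 1) (max (min a b + c) (min a b + 2)) := by
  ext n
  simp only [SimpleGraph.colorSpectrum, Set.mem_setOf_eq, Set.mem_Icc]
  constructor
  · rintro ⟨w, hadj, hcol⟩
    rw [adj_u3] at hadj
    rcases hadj with rfl | rfl | ⟨k, rfl⟩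
    · rw [scol_u3v1] at hcol; omega
    · rw [scol_u3v2] at hcol; omega
    · rw [scol_u3z] at hcol; have := k.2; omega
  · rintro ⟨h1, h2⟩
    by_cases hnc : n ≤ min a b + c
    · exact ⟨.z ⟨n - min a b - 1, by omega⟩, (adj_u3 _).2 (Or.inr (Or.inr ⟨_, rfl⟩)),
        by rw [scol_u3z]; simp; omega⟩
    · exact ⟨.v 2, (adj_u3 _).2 (Or.inr (Or.inl rfl)), by rw [scol_u3v2]; omega⟩

lemma spec_v0 (ha : 0 < a) (hb : 0 < b) (hc : 0 < c) :
    (Sgraph a b c).colorSpectrum (Scol a b c) (.v 0) = Set.Icc 1 1 := by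
  ext n
  simp only [SimpleGraph.colorSpectrum, Set.mem_setOf_eq, Set.mem_Icc]
  constructor
  · rintro ⟨w, hadj, hcol⟩
    rw [adj_v0] at hadj
    rcases hadj with rfl | rfl
    · rw [scol_v0u1] at hcol; omega
    · rw [scol_v0u2] at hcol; omega
  · rintro ⟨h1, h2⟩
    exact ⟨.u 1, (adj_v0 _).2 (Or.inl rfl), by rw [scol_v0u1]; omega⟩

lemma spec_v1 (ha : 0 < a) (hb : 0 < b) (hc : 0 < c) :
    (Sgraph a b c).colorSpectrum (Scol a b c) (.v 1) =
      Set.Icc (min a b + 1) (min a b + 1) := by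
  ext n
  simp only [SimpleGraph.colorSpectrum, Set.mem_setOf_eq, Set.mem_Icc]
  constructor
  · rintro ⟨w, hadj, hcol⟩
    rw [adj_v1] at hadj
    rcases hadj with rfl | rfl
    · rw [scol_v1u2] at hcol; omega
    · rw [scol_v1u3] at hcol; omega
  · rintro ⟨h1, h2⟩
    exact ⟨.u 2, (adj_v1 _).2 (Or.inl rfl), by rw [scol_v1u2]; omega⟩

lemma spec_v2 (ha : 0 < a) (hb : 0 < b) (hc : 0 < c) :
    (Sgraph a b c).colorSpectrum (Scol a b c) (.v 2) =
      Set.Icc (min (min a b + 2) (a + 1)) (min a b + 2) := by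
  ext n
  simp only [SimpleGraph.colorSpectrum, Set.mem_setOf_eq, Set.mem_Icc]
  constructor
  · rintro ⟨w, hadj, hcol⟩
    rw [adj_v2] at hadj
    rcases hadj with rfl | rfl
    · rw [scol_v2u1] at hcol; omega
    · rw [scol_v2u3] at hcol; omega
  · rintro ⟨h1, h2⟩
    by_cases hn : n = min a b + 2
    · exact ⟨.u 3, (adj_v2 _).2 (Or.inr rfl), by rw [scol_v2u3]; omega⟩
    · exact ⟨.u 1, (adj_v2 _).2 (Or.inl rfl), by rw [scol_v2u1]; omega⟩

lemma spec_x (ha : 0 < a) (hb : 0 < b) (hc : 0 < c) (i : Fin a) :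
    (Sgraph a b c).colorSpectrum (Scol a b c) (.x i) =
      Set.Icc (i.1 + 1) (i.1 + 1) := by
  ext n
  simp only [SimpleGraph.colorSpectrum, Set.mem_setOf_eq, Set.mem_Icc]
  constructor
  · rintro ⟨w, hadj, hcol⟩
    rw [adj_x] at hadj
    rcases hadj with rfl | rfl
    · rw [scol_xu0] at hcol; omega
    · rw [scol_xu1] at hcol; omega
  · rintro ⟨h1, h2⟩
    exact ⟨.u 0, (adj_x i _).2 (Or.inl rfl), by rw [scol_xu0]; omega⟩

lemma spec_y (ha : 0 < a) (hb : 0 < b) (hc : 0 < c) (j : Fin b) :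
    (Sgraph a b c).colorSpectrum (Scol a b c) (.y j) =
      Set.Icc (j.1 + 1) (j.1 + 1) := by
  ext n
  simp only [SimpleGraph.colorSpectrum, Set.mem_setOf_eq, Set.mem_Icc]
  constructor
  · rintro ⟨w, hadj, hcol⟩
    rw [adj_y] at hadj
    rcases hadj with rfl | rfl
    · rw [scol_yu0] at hcol; omega
    · rw [scol_yu2] at hcol; omega
  · rintro ⟨h1, h2⟩
    exact ⟨.u 0, (adj_y j _).2 (Or.inl rfl), by rw [scol_yu0]; omega⟩

lemma spec_z (ha : 0 < a) (hb : 0 < b) (hc : 0 < c) (k : Fin c) :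
    (Sgraph a b c).colorSpectrum (Scol a b c) (.z k) =
      Set.Icc (min a b + k.1 + 1) (min a b + k.1 + 1) := by
  ext n
  simp only [SimpleGraph.colorSpectrum, Set.mem_setOf_eq, Set.mem_Icc]
  constructor
  · rintro ⟨w, hadj, hcol⟩
    rw [adj_z] at hadj
    rcases hadj with rfl | rfl
    · rw [scol_zu0] at hcol; omega
    · rw [scol_zu3] at hcol; omega
  · rintro ⟨h1, h2⟩
    exact ⟨.u 0, (adj_z k _).2 (Or.inl rfl), by rw [scol_zu0]; omega⟩

end Spec

/-- For all positive `a, b, c`, the impropriety of `S_{a,b,c}` is at most 2. -/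
theorem statement1 (a b c : ℕ) (ha : 0 < a) (hb : 0 < b) (hc : 0 < c) :
    (Sgraph a b c).muInt ≤ 2 := by
  apply Nat.sInf_le
  refine ⟨Scol a b c, ?_, ?_⟩
  · intro v n
    cases v with
    | u i =>
      fin_cases i
      · exact mult_u0 ha hb hc n
      · exact mult_u1 ha hb hc n
      · exact mult_u2 ha hb hc n
      · exact mult_u3 ha hb hc n
    | v i =>
      fin_cases i
      · exact mult_pair (fun w h => (adj_v0 w).1 h.1)
      · exact mult_pair (fun w h => (adj_v1 w).1 h.1)
      · exact mult_pair (fun w h => (adj_v2 w).1 h.1)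
    | x i => exact mult_pair (fun w h => (adj_x i w).1 h.1)
    | y j => exact mult_pair (fun w h => (adj_y j w).1 h.1)
    | z k => exact mult_pair (fun w h => (adj_z k w).1 h.1)
  · intro v
    cases v with
    | u i =>
      fin_cases i
      · show IsIntervalSet ((Sgraph a b c).colorSpectrum (Scol a b c) (.u 0))
        rw [spec_u0 ha hb hc]; exact isIntervalSet_Icc _ _
      · show IsIntervalSet ((Sgraph a b c).colorSpectrum (Scol a b c) (.u 1))
        rw [spec_u1 ha hb hc]; exact isIntervalSet_Icc _ _
      · show IsIntervalSet ((Sgraph a b c).colorSpectrum (Scol a b c) (.u 2))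
        rw [spec_u2 ha hb hc]; exact isIntervalSet_Icc _ _
      · show IsIntervalSet ((Sgraph a b c).colorSpectrum (Scol a b c) (.u 3))
        rw [spec_u3 ha hb hc]; exact isIntervalSet_Icc _ _
    | v i =>
      fin_cases i
      · show IsIntervalSet ((Sgraph a b c).colorSpectrum (Scol a b c) (.v 0))
        rw [spec_v0 ha hb hc]; exact isIntervalSet_Icc _ _
      · show IsIntervalSet ((Sgraph a b c).colorSpectrum (Scol a b c) (.v 1))
        rw [spec_v1 ha hb hc]; exact isIntervalSet_Icc _ _
      · show IsIntervalSet ((Sgraph a b c).colorSpectrum (Scol a b c) (.v 2))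
        rw [spec_v2 ha hb hc]; exact isIntervalSet_Icc _ _
    | x i => rw [spec_x ha hb hc i]; exact isIntervalSet_Icc _ _
    | y j => rw [spec_y ha hb hc j]; exact isIntervalSet_Icc _ _
    | z k => rw [spec_z ha hb hc k]; exact isIntervalSet_Icc _ _
end

section
/- Let θ_m (m ≥ 2) be a generalized θ-graph, consisting of two vertices u and v joined by m internally vertex-disjoint paths. Then μ_int(θ_m) = 1 if θ_m is not an Eulerian graph with an odd number of edges, and μ_int(θ_m) = 2 if θ_m is Eulerian and has an odd number of edges. -/
open SimpleGraph

open scoped Classical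

/-- Vertices of the generalized θ-graph: the two endpoints `u = Sum.inl true` and
`v = Sum.inl false`, together with the internal vertices of the `m` paths, where the
`i`-th path has length `ℓ i` (hence `ℓ i - 1` internal vertices). -/
abbrev ThetaVert (m : ℕ) (ℓ : Fin m → ℕ) : Type :=
  Bool ⊕ (Σ i : Fin m, Fin (ℓ i - 1))

/-- The generalized θ-graph `θ_m`: two vertices `u` and `v` joined by `m` internally
vertex-disjoint paths, the `i`-th of length `ℓ i`. -/
def theta (m : ℕ) (ℓ : Fin m → ℕ) : SimpleGraph (ThetaVert m ℓ) :=
  SimpleGraph.fromRel (fun a b =>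
    (a = Sum.inl true ∧ b = Sum.inl false ∧ ∃ i, ℓ i = 1) ∨
    (∃ i j, a = Sum.inl true ∧ b = Sum.inr ⟨i, j⟩ ∧ (j : ℕ) = 0) ∨
    (∃ (i : Fin m) (j j' : Fin (ℓ i - 1)),
      a = Sum.inr ⟨i, j⟩ ∧ b = Sum.inr ⟨i, j'⟩ ∧ (j' : ℕ) = (j : ℕ) + 1) ∨
    (∃ (i : Fin m) (j : Fin (ℓ i - 1)),
      a = Sum.inr ⟨i, j⟩ ∧ b = Sum.inl false ∧ (j : ℕ) + 2 = ℓ i))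

/-!
Lower bound: if all degrees are even, a proper interval coloring shows an interval of even
length at every vertex, so exactly half of the edges at each vertex have an even color. By the
handshake lemma the even-colored edges are then half of all edges, and `|E|` is even.

Upper bound: color each path by a walk on `ℕ` moving by one at each step. A path of length `ℓ`
can go from color `a` to color `b` exactly when `|a - b| ≤ ℓ - 1` and `|a - b| ≡ ℓ - 1 (mod 2)`,
so it suffices to choose start colors at `u` and end colors at `v` forming two intervals of `m`
distinct integers and meeting these constraints. Laying out the paths with the even ones first,
this is a matter of pairing paths up; it fails only when the number of even paths is odd and
`m` is even, which is the Eulerian case with an odd number of edges. There one path stands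
still for a step, giving a 2-improper coloring.
-/

lemma isIntervalSet_Ico (a b : ℕ) : IsIntervalSet (Set.Ico a b) := by
  intro x hx y hy z hxz hzy
  simp only [Set.mem_Ico] at *
  omega

namespace Finset

lemma eq_Ico_of_isIntervalSet {S : Finset ℕ} (hS : IsIntervalSet S) (hne : S.Nonempty) :
    S = Ico (S.min' hne) (S.min' hne + #S) := by
  have hIcc : S = Icc (S.min' hne) (S.max' hne) := by
    ext x
    refine ⟨fun hx => mem_Icc.2 ⟨S.min'_le x hx, S.le_max' x hx⟩, fun hx => ?_⟩
    rw [mem_Icc] at hx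
    exact_mod_cast hS _ (S.min'_mem hne) _ (S.max'_mem hne) x hx.1 hx.2
  have hcard : #S = S.max' hne + 1 - S.min' hne := by
    conv_lhs => rw [hIcc]
    exact Nat.card_Icc _ _
  have hle : S.min' hne ≤ S.max' hne := S.min'_le _ (S.max'_mem hne)
  conv_lhs => rw [hIcc]
  ext x
  simp only [mem_Icc, mem_Ico]
  omega

lemma card_filter_even_Ico (a d : ℕ) : #{x ∈ Ico a (a + 2 * d) | Even x} = d := by
  induction d with
  | zero => simp
  | succ d ih =>
    rw [show a + 2 * (d + 1) = a + 2 * d + 1 + 1 by ring,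
      Nat.Ico_succ_right_eq_insert_Ico (by omega), Nat.Ico_succ_right_eq_insert_Ico (by omega),
      filter_insert, filter_insert]
    by_cases h : Even (a + 2 * d)
    · have h' : ¬ Even (a + 2 * d + 1) := by simpa [Nat.even_add_one] using h
      rw [if_neg h', if_pos h, card_insert_of_notMem (by simp), ih]
    · have h' : Even (a + 2 * d + 1) := by simpa [Nat.even_add_one] using h
      rw [if_pos h', if_neg h, card_insert_of_notMem (by simp), ih]

lemma two_mul_card_filter_even {S : Finset ℕ} (hS : IsIntervalSet S) (heven : Even #S) :
    2 * #{x ∈ S | Even x} = #S := by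
  rcases S.eq_empty_or_nonempty with rfl | hne
  · simp
  obtain ⟨d, hd⟩ := heven
  rw [eq_Ico_of_isIntervalSet hS hne, hd, ← two_mul, card_filter_even_Ico]
  simp

end Finset

namespace SimpleGraph

open Finset

variable {V : Type*} (G : SimpleGraph V)

lemma not_isImproperIntervalColoring_zero [Finite V] {a b : V} (hab : G.Adj a b)
    (c : Sym2 V → ℕ) : ¬ G.IsImproperIntervalColoring c 0 := by
  intro hc
  have h := hc.1 a (c s(a, b))
  rw [Nat.le_zero, Set.ncard_eq_zero (Set.toFinite _)] at h
  exact (Set.eq_empty_iff_forall_notMem.1 h) b ⟨hab, rfl⟩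

lemma even_card_edgeFinset_of_isImproperIntervalColoring_one [Fintype V] [DecidableRel G.Adj]
    (hdeg : ∀ w, Even (G.degree w)) {c : Sym2 V → ℕ} (hc : G.IsImproperIntervalColoring c 1) :
    Even #G.edgeFinset := by
  have hinj : ∀ w, Set.InjOn (fun w' => c s(w, w')) (G.neighborSet w) := by
    intro w w₁ h₁ w₂ h₂ heq
    exact (Set.ncard_le_one_iff (Set.toFinite _)).1 (hc.1 w (c s(w, w₂))) ⟨h₁, heq⟩ ⟨h₂, rfl⟩
  let spectrum w := (G.neighborFinset w).image (fun w' => c s(w, w'))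
  have hspectrum : ∀ w, IsIntervalSet (spectrum w) := by
    intro w
    convert hc.2 w using 1
    ext n
    simp [spectrum, colorSpectrum]
  have hcard : ∀ w, #(spectrum w) = G.degree w := fun w =>
    card_image_of_injOn fun x hx y hy => hinj w (by simpa using hx) (by simpa using hy)
  let G' := G.deleteEdges {e | ¬ Even (c e)}
  have hdeg' : ∀ w, 2 * G'.degree w = G.degree w := by
    intro w
    have hnbr : G'.neighborFinset w = {w' ∈ G.neighborFinset w | Even (c s(w, w'))} := by
      ext w'
      simp [G']
    have himage : #(G'.neighborFinset w) = #{n ∈ spectrum w | Even n} := by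
      rw [hnbr, filter_image, card_image_of_injOn]
      intro x hx y hy
      exact hinj w (by simpa using (mem_filter.1 hx).1) (by simpa using (mem_filter.1 hy).1)
    rw [← card_neighborFinset_eq_degree, himage,
      two_mul_card_filter_even (hspectrum w) (by rw [hcard]; exact hdeg w), hcard]
  have h := G.sum_degrees_eq_twice_card_edges
  have h' := G'.sum_degrees_eq_twice_card_edges
  rw [← sum_congr rfl fun w _ => hdeg' w, ← mul_sum, h'] at h
  exact even_iff_two_dvd.2 ⟨_, (Nat.eq_of_mul_eq_mul_left two_pos h).symm⟩

lemma muInt_eq_of_isLeast {k : ℕ} (hk : ∃ c, G.IsImproperIntervalColoring c k)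
    (hlt : ∀ j < k, ∀ c, ¬ G.IsImproperIntervalColoring c j) : G.muInt = k :=
  IsLeast.csInf_eq ⟨hk, fun j ⟨c, hc⟩ => not_lt.1 fun hj => hlt j hj c hc⟩

variable {G} {ι : Type*} {w : V} {f : ι → V}

lemma colorSpectrum_eq_range (hnbr : ∀ w', G.Adj w w' ↔ ∃ x, f x = w') (c : Sym2 V → ℕ) :
    G.colorSpectrum c w = Set.range fun x => c s(w, f x) := by
  ext n
  simp only [colorSpectrum, Set.mem_ofPred_eq, Set.mem_range, hnbr]
  constructor
  · rintro ⟨_, ⟨x, rfl⟩, rfl⟩; exact ⟨x, rfl⟩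
  · rintro ⟨x, rfl⟩; exact ⟨f x, ⟨x, rfl⟩, rfl⟩

lemma ncard_adj_color_le [Finite ι] (hnbr : ∀ w', G.Adj w w' ↔ ∃ x, f x = w')
    (c : Sym2 V → ℕ) (n : ℕ) :
    {w' | G.Adj w w' ∧ c s(w, w') = n}.ncard ≤ {x | c s(w, f x) = n}.ncard := by
  have : {w' | G.Adj w w' ∧ c s(w, w') = n} = f '' {x | c s(w, f x) = n} := by
    ext w'
    simp only [Set.mem_ofPred_eq, Set.mem_image, hnbr]
    constructor
    · rintro ⟨⟨x, rfl⟩, hx⟩; exact ⟨x, hx, rfl⟩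
    · rintro ⟨x, hx, rfl⟩; exact ⟨⟨x, rfl⟩, hx⟩
  rw [this]
  exact Set.ncard_image_le (Set.toFinite _)

lemma degree_eq_card [Fintype V] [DecidableRel G.Adj] [Fintype ι] (hf : Function.Injective f)
    (hnbr : ∀ w', G.Adj w w' ↔ ∃ x, f x = w') : G.degree w = Fintype.card ι := by
  classical
  rw [← card_neighborFinset_eq_degree,
    show G.neighborFinset w = Finset.univ.image f by ext; simp [hnbr],
    Finset.card_image_of_injective _ hf, Finset.card_univ]

end SimpleGraph

section Theta

variable {m : ℕ} {ℓ : Fin m → ℕ}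

variable (ℓ) in
/-- The vertex at distance `t` from `u` along the `i`-th path (`v` once `t ≥ ℓ i`). -/
def pathVert (i : Fin m) (t : ℕ) : ThetaVert m ℓ :=
  if ht : t = 0 then Sum.inl true
  else if h : t < ℓ i then Sum.inr ⟨i, ⟨t - 1, by omega⟩⟩ else Sum.inl false

@[simp] lemma pathVert_zero (i : Fin m) : pathVert ℓ i 0 = Sum.inl true := rfl

lemma pathVert_of_le {i : Fin m} {t : ℕ} (ht : t ≠ 0) (h : ℓ i ≤ t) :
    pathVert ℓ i t = Sum.inl false := by
  simp [pathVert, ht, not_lt.2 h]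

lemma pathVert_succ {i : Fin m} (j : Fin (ℓ i - 1)) :
    pathVert ℓ i (j + 1) = Sum.inr ⟨i, j⟩ := by
  have := j.isLt
  simp only [pathVert, Nat.add_one_ne_zero, dif_neg, not_false_eq_true,
    dif_pos (show (j : ℕ) + 1 < ℓ i by omega)]
  rfl

lemma pathVert_eq_pathVert_iff {i i' : Fin m} {t t' : ℕ} :
    pathVert ℓ i t = pathVert ℓ i' t' ↔
      (t = 0 ∧ t' = 0) ∨ (t ≠ 0 ∧ ℓ i ≤ t ∧ t' ≠ 0 ∧ ℓ i' ≤ t') ∨ (i = i' ∧ t = t') := by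
  constructor
  · intro h
    unfold pathVert at h
    split_ifs at h <;> simp only [Sum.inr.injEq, Sum.inl.injEq, Bool.true_eq_false,
      Bool.false_eq_true] at h
    all_goals first
      | omega
      | (obtain ⟨rfl, h⟩ := Sigma.mk.inj_iff.1 h
         have := Fin.val_eq_of_eq (eq_of_heq h)
         simp only at this
         omega)
  · rintro (⟨rfl, rfl⟩ | ⟨h1, h2, h3, h4⟩ | ⟨rfl, rfl⟩)
    · rfl
    · rw [pathVert_of_le h1 h2, pathVert_of_le h3 h4]
    · rfl

lemma pathVert_ne_pathVert_succ {i : Fin m} {t : ℕ} (ht : t < ℓ i) :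
    pathVert ℓ i t ≠ pathVert ℓ i (t + 1) := by
  rw [Ne, pathVert_eq_pathVert_iff]
  omega

lemma exists_eq_pathVert (hm : 0 < m) (w : ThetaVert m ℓ) : ∃ i t, pathVert ℓ i t = w := by
  rcases w with (_ | _) | ⟨i, j⟩
  · exact ⟨⟨0, hm⟩, ℓ ⟨0, hm⟩ + 1, pathVert_of_le (by omega) (by omega)⟩
  · exact ⟨⟨0, hm⟩, 0, rfl⟩
  · exact ⟨i, j + 1, pathVert_succ j⟩

lemma theta_rel_iff {a b : ThetaVert m ℓ} :
    ((a = Sum.inl true ∧ b = Sum.inl false ∧ ∃ i, ℓ i = 1) ∨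
      (∃ i j, a = Sum.inl true ∧ b = Sum.inr ⟨i, j⟩ ∧ (j : ℕ) = 0) ∨
      (∃ (i : Fin m) (j j' : Fin (ℓ i - 1)),
        a = Sum.inr ⟨i, j⟩ ∧ b = Sum.inr ⟨i, j'⟩ ∧ (j' : ℕ) = (j : ℕ) + 1) ∨
      (∃ (i : Fin m) (j : Fin (ℓ i - 1)),
        a = Sum.inr ⟨i, j⟩ ∧ b = Sum.inl false ∧ (j : ℕ) + 2 = ℓ i)) ↔
    ∃ i, ∃ t < ℓ i, a = pathVert ℓ i t ∧ b = pathVert ℓ i (t + 1) := by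
  constructor
  · rintro (⟨rfl, rfl, i, hi⟩ | ⟨i, j, rfl, rfl, hj⟩ | ⟨i, j, j', rfl, rfl, hj⟩ |
      ⟨i, j, rfl, rfl, hj⟩)
    · exact ⟨i, 0, by omega, rfl, (pathVert_of_le one_ne_zero hi.le).symm⟩
    · refine ⟨i, 0, by omega, rfl, ?_⟩
      rw [← pathVert_succ j, hj]
    · refine ⟨i, j + 1, by omega, (pathVert_succ j).symm, ?_⟩
      rw [← pathVert_succ j', hj]
    · exact ⟨i, j + 1, by omega, (pathVert_succ j).symm,
        (pathVert_of_le (by omega) (by omega)).symm⟩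
  · rintro ⟨i, t, ht, rfl, rfl⟩
    rcases t with _ | s
    · by_cases hi : ℓ i = 1
      · exact Or.inl ⟨rfl, pathVert_of_le one_ne_zero hi.le, i, hi⟩
      · exact Or.inr <| Or.inl ⟨i, ⟨0, by omega⟩, rfl, pathVert_succ ⟨0, by omega⟩, rfl⟩
    · have ha := pathVert_succ (ℓ := ℓ) (i := i) ⟨s, by omega⟩
      by_cases hs : s + 2 < ℓ i
      · exact Or.inr <| Or.inr <| Or.inl ⟨i, ⟨s, by omega⟩, ⟨s + 1, by omega⟩, ha,
          pathVert_succ ⟨s + 1, by omega⟩, rfl⟩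
      · exact Or.inr <| Or.inr <| Or.inr ⟨i, ⟨s, by omega⟩, ha,
          pathVert_of_le (by omega) (by omega), by simp only; omega⟩

variable (ℓ) in
def pathEdge (i : Fin m) (t : ℕ) : Sym2 (ThetaVert m ℓ) :=
  s(pathVert ℓ i t, pathVert ℓ i (t + 1))

lemma theta_adj_iff {a b : ThetaVert m ℓ} :
    (theta m ℓ).Adj a b ↔ ∃ i, ∃ t < ℓ i, s(a, b) = pathEdge ℓ i t := by
  rw [theta, fromRel_adj, theta_rel_iff, theta_rel_iff]
  constructor
  · rintro ⟨-, ⟨i, t, ht, rfl, rfl⟩ | ⟨i, t, ht, rfl, rfl⟩⟩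
    · exact ⟨i, t, ht, rfl⟩
    · exact ⟨i, t, ht, Sym2.eq_swap⟩
  · rintro ⟨i, t, ht, h⟩
    rcases Sym2.eq_iff.1 h with ⟨rfl, rfl⟩ | ⟨rfl, rfl⟩
    · exact ⟨pathVert_ne_pathVert_succ ht, Or.inl ⟨i, t, ht, rfl, rfl⟩⟩
    · exact ⟨(pathVert_ne_pathVert_succ ht).symm, Or.inr ⟨i, t, ht, rfl, rfl⟩⟩

lemma theta_adj_pathVert {i : Fin m} {t : ℕ} (ht : t < ℓ i) :
    (theta m ℓ).Adj (pathVert ℓ i t) (pathVert ℓ i (t + 1)) :=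
  theta_adj_iff.2 ⟨i, t, ht, rfl⟩

lemma pathEdge_eq_pathEdge_iff (hone : ∀ i j, ℓ i = 1 → ℓ j = 1 → i = j) {i i' : Fin m}
    {t t' : ℕ} (ht : t < ℓ i) (ht' : t' < ℓ i') :
    pathEdge ℓ i t = pathEdge ℓ i' t' ↔ i = i' ∧ t = t' := by
  refine ⟨fun h => ?_, by rintro ⟨rfl, rfl⟩; rfl⟩
  rcases Sym2.eq_iff.1 h with ⟨h₁, h₂⟩ | ⟨h₁, h₂⟩ <;>
    rw [pathVert_eq_pathVert_iff] at h₁ h₂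
  · rcases h₂ with h₂ | h₂ | h₂
    · omega
    · rcases h₁ with h₁ | h₁ | h₁
      · exact ⟨hone i i' (by omega) (by omega), by omega⟩
      · omega
      · exact h₁
    · exact ⟨h₂.1, by omega⟩
  · omega

lemma theta_edgeFinset :
    (theta m ℓ).edgeFinset =
      (Finset.univ.sigma fun i => Finset.range (ℓ i)).image fun x => pathEdge ℓ x.1 x.2 := by
  ext e
  induction e using Sym2.ind with
  | _ a b => simp [theta_adj_iff, eq_comm]

lemma card_theta_edgeFinset (hone : ∀ i j, ℓ i = 1 → ℓ j = 1 → i = j) :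
    (theta m ℓ).edgeFinset.card = ∑ i, ℓ i := by
  rw [theta_edgeFinset, Finset.card_image_of_injOn, Finset.card_sigma]
  · simp
  · rintro ⟨i, t⟩ hx ⟨i', t'⟩ hx' h
    simp only [Finset.coe_sigma, Set.mem_sigma_iff, Finset.coe_univ, Set.mem_univ,
      Finset.coe_range, Set.mem_Iio, true_and] at hx hx'
    obtain ⟨rfl, rfl⟩ := (pathEdge_eq_pathEdge_iff hone hx hx').1 h
    rfl

lemma theta_adj_u_iff (hℓ : ∀ i, 1 ≤ ℓ i) {w : ThetaVert m ℓ} :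
    (theta m ℓ).Adj (Sum.inl true) w ↔ ∃ i, pathVert ℓ i 1 = w := by
  rw [theta_adj_iff]
  constructor
  · rintro ⟨i, t, ht, h⟩
    rcases Sym2.eq_iff.1 h with ⟨h₁, rfl⟩ | ⟨h₁, rfl⟩ <;>
      rw [← pathVert_zero i, pathVert_eq_pathVert_iff] at h₁
    · exact ⟨i, by rw [show t = 0 by omega]⟩
    · omega
  · rintro ⟨i, rfl⟩
    exact ⟨i, 0, hℓ i, rfl⟩

lemma theta_adj_v_iff (hℓ : ∀ i, 1 ≤ ℓ i) {w : ThetaVert m ℓ} :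
    (theta m ℓ).Adj (Sum.inl false) w ↔ ∃ i, pathVert ℓ i (ℓ i - 1) = w := by
  rw [theta_adj_iff]
  constructor
  · rintro ⟨i, t, ht, h⟩
    rcases Sym2.eq_iff.1 h with ⟨h₁, rfl⟩ | ⟨h₁, rfl⟩ <;>
      rw [← pathVert_of_le (i := i) (Nat.add_one_ne_zero (ℓ i)) (by omega),
        pathVert_eq_pathVert_iff] at h₁
    · omega
    · exact ⟨i, by rw [show ℓ i - 1 = t by omega]⟩
  · rintro ⟨i, rfl⟩
    refine ⟨i, ℓ i - 1, by have := hℓ i; omega, ?_⟩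
    rw [pathEdge, Nat.sub_add_cancel (hℓ i), pathVert_of_le (by have := hℓ i; omega) le_rfl,
      Sym2.eq_swap]

lemma theta_adj_inr_iff {i : Fin m} (j : Fin (ℓ i - 1)) {w : ThetaVert m ℓ} :
    (theta m ℓ).Adj (Sum.inr ⟨i, j⟩) w ↔ ∃ x : Fin 2, pathVert ℓ i (j + 2 * x) = w := by
  rw [theta_adj_iff, ← pathVert_succ j]
  constructor
  · rintro ⟨i', t, ht, h⟩
    rcases Sym2.eq_iff.1 h with ⟨h₁, rfl⟩ | ⟨h₁, rfl⟩ <;>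
      rw [pathVert_eq_pathVert_iff] at h₁
    · refine ⟨1, ?_⟩
      obtain ⟨rfl, rfl⟩ : i = i' ∧ (j : ℕ) + 1 = t := by omega
      rfl
    · refine ⟨0, ?_⟩
      obtain ⟨rfl, rfl⟩ : i = i' ∧ (j : ℕ) = t := by omega
      simp
  · rintro ⟨x, rfl⟩
    fin_cases x
    · exact ⟨i, j, by omega, Sym2.eq_swap⟩
    · exact ⟨i, j + 1, by omega, rfl⟩

lemma pathVert_one_injective (hℓ : ∀ i, 1 ≤ ℓ i) (hone : ∀ i j, ℓ i = 1 → ℓ j = 1 → i = j) :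
    Function.Injective fun i => pathVert ℓ i 1 := by
  intro i i' h
  rcases pathVert_eq_pathVert_iff.1 h with h | h | h
  · omega
  · exact hone i i' (by have := hℓ i; omega) (by have := hℓ i'; omega)
  · exact h.1

lemma pathVert_pred_injective (hℓ : ∀ i, 1 ≤ ℓ i)
    (hone : ∀ i j, ℓ i = 1 → ℓ j = 1 → i = j) :
    Function.Injective fun i => pathVert ℓ i (ℓ i - 1) := by
  intro i i' h
  rcases pathVert_eq_pathVert_iff.1 h with h | h | h
  · exact hone i i' (by have := hℓ i; omega) (by have := hℓ i'; omega)
  · have := hℓ i; omega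
  · exact h.1

lemma pathVert_two_mul_injective {i : Fin m} (j : Fin (ℓ i - 1)) :
    Function.Injective fun x : Fin 2 => pathVert ℓ i (j + 2 * x) := by
  intro x x' h
  have := j.isLt
  have := x.isLt
  have := x'.isLt
  rcases pathVert_eq_pathVert_iff.1 h with h | h | h <;> ext <;> omega

lemma theta_degree_u (hℓ : ∀ i, 1 ≤ ℓ i) (hone : ∀ i j, ℓ i = 1 → ℓ j = 1 → i = j) :
    (theta m ℓ).degree (Sum.inl true) = m := by
  rw [degree_eq_card (pathVert_one_injective hℓ hone) fun _ => theta_adj_u_iff hℓ,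
    Fintype.card_fin]

lemma theta_degree_v (hℓ : ∀ i, 1 ≤ ℓ i) (hone : ∀ i j, ℓ i = 1 → ℓ j = 1 → i = j) :
    (theta m ℓ).degree (Sum.inl false) = m := by
  rw [degree_eq_card (pathVert_pred_injective hℓ hone) fun _ => theta_adj_v_iff hℓ,
    Fintype.card_fin]

lemma theta_degree_inr {i : Fin m} (j : Fin (ℓ i - 1)) :
    (theta m ℓ).degree (Sum.inr ⟨i, j⟩) = 2 := by
  rw [degree_eq_card (pathVert_two_mul_injective j) fun _ => theta_adj_inr_iff j,
    Fintype.card_fin]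

lemma theta_connected (hm : 0 < m) (hℓ : ∀ i, 1 ≤ ℓ i) : (theta m ℓ).Connected := by
  have hreach : ∀ i t, (theta m ℓ).Reachable (Sum.inl true) (pathVert ℓ i t) := by
    intro i t
    induction t with
    | zero => rfl
    | succ t ih =>
      by_cases ht : t < ℓ i
      · exact ih.trans (theta_adj_pathVert ht).reachable
      · have := hℓ i
        rwa [pathVert_of_le (by omega) (by omega),
          ← pathVert_of_le (i := i) (t := t) (by omega) (by omega)]
  rw [connected_iff_exists_forall_reachable]
  refine ⟨Sum.inl true, fun w => ?_⟩
  obtain ⟨i, t, rfl⟩ := exists_eq_pathVert hm w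
  exact hreach i t

variable (ℓ) in
noncomputable def numEven : ℕ := (Finset.univ.filter fun i => Even (ℓ i)).card

lemma theta_eulerian_odd_iff (hm : 0 < m) (hℓ : ∀ i, 1 ≤ ℓ i)
    (hone : ∀ i j, ℓ i = 1 → ℓ j = 1 → i = j) :
    ((theta m ℓ).Connected ∧ (∀ w, Even ((theta m ℓ).degree w)) ∧
        Odd (theta m ℓ).edgeFinset.card) ↔
      Even m ∧ Odd (numEven ℓ) := by
  have hdeg : (∀ w, Even ((theta m ℓ).degree w)) ↔ Even m := by
    refine ⟨fun h => theta_degree_u hℓ hone ▸ h _, fun h w => ?_⟩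
    rcases w with (_ | _) | ⟨i, j⟩
    · rwa [theta_degree_v hℓ hone]
    · rwa [theta_degree_u hℓ hone]
    · rw [theta_degree_inr]; exact even_two
  have hsplit := Finset.card_filter_add_card_filter_not (s := Finset.univ)
    (fun i : Fin m => Even (ℓ i))
  simp only [Finset.card_univ, Fintype.card_fin, Nat.not_even_iff_odd] at hsplit
  rw [card_theta_edgeFinset hone, Finset.odd_sum_iff_odd_card_odd, hdeg,
    iff_true_intro (theta_connected hm hℓ), true_and]
  refine and_congr_right fun hmeven => ?_
  rw [← hsplit, Nat.even_add] at hmeven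
  rw [numEven, ← Nat.not_even_iff_odd, ← Nat.not_even_iff_odd, hmeven]

end Theta

lemma isIntervalSet_range_fin_two {f : Fin 2 → ℕ} (h : Nat.dist (f 0) (f 1) ≤ 1) :
    IsIntervalSet (Set.range f) := by
  simp only [IsIntervalSet, Set.mem_range, Fin.exists_fin_two, Nat.dist] at *
  omega

section PathColoring

variable {m : ℕ} {ℓ : Fin m → ℕ}

variable (ℓ) in
noncomputable def pathColoring (g : Fin m → ℕ → ℕ) (e : Sym2 (ThetaVert m ℓ)) : ℕ :=
  if h : ∃ x : Fin m × ℕ, x.2 < ℓ x.1 ∧ pathEdge ℓ x.1 x.2 = e then g h.choose.1 h.choose.2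
  else 0

variable (hone : ∀ i j, ℓ i = 1 → ℓ j = 1 → i = j) (g : Fin m → ℕ → ℕ)
include hone

lemma pathColoring_pathEdge {i : Fin m} {t : ℕ} (ht : t < ℓ i) :
    pathColoring ℓ g (pathEdge ℓ i t) = g i t := by
  have h : ∃ x : Fin m × ℕ, x.2 < ℓ x.1 ∧ pathEdge ℓ x.1 x.2 = pathEdge ℓ i t :=
    ⟨(i, t), ht, rfl⟩
  obtain ⟨hi, ht'⟩ := (pathEdge_eq_pathEdge_iff hone h.choose_spec.1 ht).1 h.choose_spec.2
  rw [pathColoring, dif_pos h, hi, ht']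

lemma pathColoring_u (hℓ : ∀ i, 1 ≤ ℓ i) (i : Fin m) :
    pathColoring ℓ g s(Sum.inl true, pathVert ℓ i 1) = g i 0 :=
  pathColoring_pathEdge hone g (hℓ i)

lemma pathColoring_v (hℓ : ∀ i, 1 ≤ ℓ i) (i : Fin m) :
    pathColoring ℓ g s(Sum.inl false, pathVert ℓ i (ℓ i - 1)) = g i (ℓ i - 1) := by
  have := hℓ i
  rw [← pathColoring_pathEdge hone g (show ℓ i - 1 < ℓ i by omega), pathEdge,
    Nat.sub_add_cancel this, pathVert_of_le (by omega) le_rfl, Sym2.eq_swap]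

lemma pathColoring_inr {i : Fin m} (j : Fin (ℓ i - 1)) (x : Fin 2) :
    pathColoring ℓ g s(Sum.inr ⟨i, j⟩, pathVert ℓ i (j + 2 * x)) = g i (j + x) := by
  have := j.isLt
  rw [← pathVert_succ j]
  obtain ⟨_ | _ | _, hx⟩ := x
  · show pathColoring ℓ g s(pathVert ℓ i (j + 1), pathVert ℓ i j) = g i j
    rw [Sym2.eq_swap]
    exact pathColoring_pathEdge hone g (by omega)
  · exact pathColoring_pathEdge hone g (show (j : ℕ) + 1 < ℓ i by omega)
  · omega

lemma isImproperIntervalColoring_pathColoring (hℓ : ∀ i, 1 ≤ ℓ i) {k : ℕ} (hk : 1 ≤ k)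
    (hu : Function.Injective fun i => g i 0) (hu' : IsIntervalSet (Set.range fun i => g i 0))
    (hv : Function.Injective fun i => g i (ℓ i - 1))
    (hv' : IsIntervalSet (Set.range fun i => g i (ℓ i - 1)))
    (hstep : ∀ i t, t + 1 < ℓ i → Nat.dist (g i t) (g i (t + 1)) ≤ 1)
    (hflat : ∀ i t, t + 1 < ℓ i → g i t = g i (t + 1) → 2 ≤ k) :
    (theta m ℓ).IsImproperIntervalColoring (pathColoring ℓ g) k := by
  have hinj {f : Fin m → ℕ} (hf : Function.Injective f) (n : ℕ) : {i | f i = n}.ncard ≤ k :=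
    le_trans (Set.ncard_le_one_iff_subsingleton.2 <| Set.subsingleton_singleton.preimage hf) hk
  constructor
  · rintro ((_ | _) | ⟨i, j⟩) n
    · refine (ncard_adj_color_le (fun _ => theta_adj_v_iff hℓ) _ n).trans ?_
      simpa only [pathColoring_v hone g hℓ] using hinj hv n
    · refine (ncard_adj_color_le (fun _ => theta_adj_u_iff hℓ) _ n).trans ?_
      simpa only [pathColoring_u hone g hℓ] using hinj hu n
    · refine (ncard_adj_color_le (fun _ => theta_adj_inr_iff j) _ n).trans ?_
      simp only [pathColoring_inr hone g j]
      have hj : (j : ℕ) + 1 < ℓ i := by omega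
      by_cases hne : g i j = g i (j + 1)
      · exact (Set.ncard_le_card _).trans (by simpa using hflat i j hj hne)
      · refine le_trans (Set.ncard_le_one_iff_subsingleton.2 ?_) hk
        intro x hx y hy
        fin_cases x <;> fin_cases y <;> simp_all
  · rintro ((_ | _) | ⟨i, j⟩)
    · rwa [colorSpectrum_eq_range (fun _ => theta_adj_v_iff hℓ),
        funext (pathColoring_v hone g hℓ)]
    · rwa [colorSpectrum_eq_range (fun _ => theta_adj_u_iff hℓ),
        funext (pathColoring_u hone g hℓ)]
    · rw [colorSpectrum_eq_range (fun _ => theta_adj_inr_iff j),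
        funext (pathColoring_inr hone g j)]
      exact isIntervalSet_range_fin_two (by simpa using hstep i j (by omega))

end PathColoring

/-- Moves from `a` to `b` one unit per step, then oscillates between `b` and `b + 1`. -/
def walk (a b t : ℕ) : ℕ :=
  if a ≤ b then (if t ≤ b - a then a + t else b + (t - (b - a)) % 2)
  else (if t ≤ a - b then a - t else b + (t - (a - b)) % 2)

lemma walk_zero (a b : ℕ) : walk a b 0 = a := by
  simp only [walk]
  split_ifs <;> omega

lemma dist_walk_succ (a b t : ℕ) : Nat.dist (walk a b t) (walk a b (t + 1)) = 1 := by
  simp only [walk, Nat.dist]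
  split_ifs <;> omega

lemma walk_of_even {a b n : ℕ} (h : Nat.dist a b ≤ n) (hpar : Even (n - Nat.dist a b)) :
    walk a b n = b := by
  obtain ⟨r, hr⟩ := hpar
  simp only [walk, Nat.dist] at *
  split_ifs <;> omega

section Endpoints

variable {m : ℕ} {ℓ : Fin m → ℕ}

/-- Path `i` walks from color `s i` to color `e i` after standing still for `delay i` steps:
a delay corrects the parity of the walk at the price of two equal colors at a vertex. -/
lemma exists_isImproperIntervalColoring_of_endpoints (hℓ : ∀ i, 1 ≤ ℓ i)
    (hone : ∀ i j, ℓ i = 1 → ℓ j = 1 → i = j) (s e delay : Fin m → ℕ) {k : ℕ} (hk : 1 ≤ k)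
    (hs : Function.Injective s) (hs' : IsIntervalSet (Set.range s))
    (he : Function.Injective e) (he' : IsIntervalSet (Set.range e))
    (hlen : ∀ i, Nat.dist (s i) (e i) + delay i ≤ ℓ i - 1)
    (hpar : ∀ i, Even (ℓ i - 1 - delay i - Nat.dist (s i) (e i)))
    (hdelay : ∀ i, delay i ≠ 0 → 2 ≤ k) :
    ∃ c, (theta m ℓ).IsImproperIntervalColoring c k := by
  set g : Fin m → ℕ → ℕ := fun i t => walk (s i) (e i) (t - delay i)
  have hstart : (fun i => g i 0) = s := funext fun i => by simp [g, walk_zero]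
  have hend : (fun i => g i (ℓ i - 1)) = e := funext fun i =>
    walk_of_even (by have := hlen i; omega) (by simpa only [Nat.sub_right_comm] using hpar i)
  have hstep (i : Fin m) (t : ℕ) :
      Nat.dist (g i t) (g i (t + 1)) = if t < delay i then 0 else 1 := by
    split_ifs with ht
    · simp [g, Nat.sub_eq_zero_of_le ht.le, Nat.sub_eq_zero_of_le ht]
    · simp only [g, Nat.sub_add_comm (not_lt.1 ht), dist_walk_succ]
  refine ⟨pathColoring ℓ g, isImproperIntervalColoring_pathColoring hone g hℓ hk
    (hstart ▸ hs) (hstart ▸ hs') (hend ▸ he) (hend ▸ he') (fun i t _ => ?_) (fun i t _ h => ?_)⟩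
  · rw [hstep]; split_ifs <;> omega
  · have := hstep i t
    rw [h, Nat.dist_self] at this
    exact hdelay i (by split_ifs at this; omega)

end Endpoints

lemma Monotone.le_iff_lt_card_filter {α : Type*} [LinearOrder α] {n : ℕ} {f : Fin n → α}
    (hf : Monotone f) (c : α) (p : Fin n) :
    f p ≤ c ↔ (p : ℕ) < (Finset.univ.filter fun q => f q ≤ c).card := by
  constructor
  · intro hp
    calc (p : ℕ) < (Finset.Iic p).card := by rw [Fin.card_Iic]; omega
      _ ≤ _ := Finset.card_le_card fun q hq =>
        Finset.mem_filter.2 ⟨Finset.mem_univ _, (hf (Finset.mem_Iic.1 hq)).trans hp⟩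
  · intro hp
    by_contra hpc
    have : (Finset.univ.filter fun q => f q ≤ c) ⊆ Finset.Iio p := fun q hq =>
      Finset.mem_Iio.2 <| lt_of_not_ge fun hpq =>
        hpc ((hf hpq).trans (Finset.mem_filter.1 hq).2)
    have := Finset.card_le_card this
    rw [Fin.card_Iio] at this
    omega

def pairSwap (a b q : ℕ) : ℕ :=
  if a ≤ q ∧ q < b then (if Even (q - a) then q + 1 else q - 1) else q

lemma pairSwap_involutive {a b : ℕ} (h : Even (b - a)) : Function.Involutive (pairSwap a b) := by
  intro q
  simp only [pairSwap, Nat.even_iff] at *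
  split_ifs <;> omega

lemma pairSwap_lt {a b m q : ℕ} (h : Even (b - a)) (hb : b ≤ m) (hq : q < m) :
    pairSwap a b q < m := by
  simp only [pairSwap, Nat.even_iff] at *
  split_ifs <;> omega

section Positions

variable {m : ℕ} (ℓ : Fin m → ℕ)

/-- The order in which the paths are laid out: even lengths first, then odd lengths `≥ 3`,
then the path of length 1. -/
def pathClass (i : Fin m) : ℕ := if Even (ℓ i) then 0 else if ℓ i = 1 then 2 else 1

noncomputable def pathPos (i : Fin m) : ℕ := (Tuple.sort (pathClass ℓ)).symm i

variable {ℓ}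

lemma pathPos_lt (i : Fin m) : pathPos ℓ i < m := Fin.isLt _

lemma pathPos_injective : Function.Injective (pathPos ℓ) :=
  Fin.val_injective.comp (Equiv.injective _)

lemma pathClass_le_iff (c : ℕ) (i : Fin m) :
    pathClass ℓ i ≤ c ↔ pathPos ℓ i < (Finset.univ.filter fun j => pathClass ℓ j ≤ c).card := by
  have hcard : (Finset.univ.filter fun q => pathClass ℓ (Tuple.sort (pathClass ℓ) q) ≤ c).card =
      (Finset.univ.filter fun j => pathClass ℓ j ≤ c).card :=
    Finset.card_equiv (Tuple.sort (pathClass ℓ)) fun q => by simp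
  have key := (Tuple.monotone_sort (pathClass ℓ)).le_iff_lt_card_filter c
    ((Tuple.sort (pathClass ℓ)).symm i)
  simp only [Function.comp_apply, Equiv.apply_symm_apply] at key
  rwa [hcard] at key

lemma even_iff_pathPos_lt (i : Fin m) : Even (ℓ i) ↔ pathPos ℓ i < numEven ℓ := by
  have hclass : ∀ j, pathClass ℓ j ≤ 0 ↔ Even (ℓ j) := fun j => by
    unfold pathClass; split_ifs <;> simp_all
  rw [← hclass, pathClass_le_iff, numEven]
  simp only [hclass]

lemma pathPos_of_eq_one (hone : ∀ i j, ℓ i = 1 → ℓ j = 1 → i = j) {i : Fin m} (h : ℓ i = 1) :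
    pathPos ℓ i = m - 1 := by
  have hclass : ¬ pathClass ℓ i ≤ 1 := by simp [pathClass, h]
  rw [pathClass_le_iff] at hclass
  have : (Finset.univ.erase i).card ≤ (Finset.univ.filter fun j => pathClass ℓ j ≤ 1).card :=
    Finset.card_le_card fun j hj => by
      have hji := Finset.ne_of_mem_erase hj
      refine Finset.mem_filter.2 ⟨Finset.mem_univ _, ?_⟩
      unfold pathClass
      split_ifs with h₁ h₂ <;> first | omega | exact absurd (hone j i h₂ h) hji
  rw [Finset.card_erase_of_mem (Finset.mem_univ i), Finset.card_univ, Fintype.card_fin] at this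
  have := pathPos_lt (ℓ := ℓ) i
  omega

lemma numEven_le : numEven ℓ ≤ m :=
  (Finset.card_le_univ _).trans (Fintype.card_fin m).le

lemma injective_pathPos_comp {π : ℕ → ℕ} (hπ : Function.Injective π) (B : ℕ) :
    Function.Injective fun i => π (pathPos ℓ i) + B :=
  fun _ _ h => pathPos_injective (hπ (Nat.add_right_cancel h))

lemma isIntervalSet_range_pathPos_comp {π : ℕ → ℕ} (hπ : Function.Involutive π)
    (hπm : ∀ q < m, π q < m) (B : ℕ) :
    IsIntervalSet (Set.range fun i => π (pathPos ℓ i) + B) := by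
  have hrange : Set.range (pathPos ℓ) = Set.Iio m := by
    refine (Set.range_subset_iff.2 (pathPos_lt (ℓ := ℓ))).antisymm fun q hq => ?_
    exact ⟨(Tuple.sort (pathClass ℓ)) ⟨q, hq⟩, by simp [pathPos]⟩
  have : Set.range (fun i => π (pathPos ℓ i) + B) = Set.Ico B (B + m) := by
    ext n
    simp only [Set.mem_range, Set.mem_Ico]
    constructor
    · rintro ⟨i, rfl⟩
      have := hπm _ (pathPos_lt (ℓ := ℓ) i)
      omega
    · rintro ⟨h₁, h₂⟩
      obtain ⟨i, hi⟩ : π (n - B) ∈ Set.range (pathPos ℓ) := hrange ▸ hπm _ (by omega)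
      exact ⟨i, by rw [hi, hπ]; omega⟩
  rw [this]
  exact isIntervalSet_Ico _ _

lemma isIntervalSet_range_pathPos : IsIntervalSet (Set.range (pathPos ℓ)) := by
  simpa using
    isIntervalSet_range_pathPos_comp (ℓ := ℓ) (π := id) (fun _ => rfl) (fun _ h => h) 0

end Positions

section Colorings

variable {m : ℕ} {ℓ : Fin m → ℕ} (hℓ : ∀ i, 1 ≤ ℓ i) (hone : ∀ i j, ℓ i = 1 → ℓ j = 1 → i = j)
include hℓ hone

/-- End colors: the start colors of the even paths swapped in pairs; odd paths end where they
start. -/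
lemma exists_isImproperIntervalColoring_one_of_even (ht : Even (numEven ℓ)) :
    ∃ c, (theta m ℓ).IsImproperIntervalColoring c 1 := by
  have hπ := pairSwap_involutive (a := 0) (b := numEven ℓ) (by simpa using ht)
  have := numEven_le (ℓ := ℓ)
  refine exists_isImproperIntervalColoring_of_endpoints hℓ hone (pathPos ℓ)
    (fun i => pairSwap 0 (numEven ℓ) (pathPos ℓ i) + 0) (fun _ => 0) le_rfl pathPos_injective
    isIntervalSet_range_pathPos (injective_pathPos_comp hπ.injective 0)
    (isIntervalSet_range_pathPos_comp hπ (fun q => pairSwap_lt (by simpa using ht) this) 0)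
    (fun i => ?_) (fun i => ?_) (by simp)
  all_goals
    have := even_iff_pathPos_lt (ℓ := ℓ) i
    have := pathPos_lt (ℓ := ℓ) i
    have := hℓ i
    simp only [pairSwap, Nat.dist, Nat.even_iff] at *
    split_ifs <;> omega

/-- End colors: the start colors plus one, those of the odd paths first swapped in pairs, so
that the path of length 1, placed last, ends where it starts. -/
lemma exists_isImproperIntervalColoring_one_of_odd (ht : Odd (numEven ℓ)) (hm : Odd m) :
    ∃ c, (theta m ℓ).IsImproperIntervalColoring c 1 := by
  have hpar : Even (m - numEven ℓ) := Nat.Odd.sub_odd hm ht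
  have hπ := pairSwap_involutive hpar
  refine exists_isImproperIntervalColoring_of_endpoints hℓ hone (pathPos ℓ)
    (fun i => pairSwap (numEven ℓ) m (pathPos ℓ i) + 1) (fun _ => 0) le_rfl pathPos_injective
    isIntervalSet_range_pathPos (injective_pathPos_comp hπ.injective 1)
    (isIntervalSet_range_pathPos_comp hπ (fun q => pairSwap_lt hpar le_rfl) 1)
    (fun i => ?_) (fun i => ?_) (by simp)
  all_goals
    have := even_iff_pathPos_lt (ℓ := ℓ) i
    have := pathPos_lt (ℓ := ℓ) i
    have := hℓ i
    have := pathPos_of_eq_one hone (i := i)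
    simp only [pairSwap, Nat.dist, Nat.even_iff, Nat.odd_iff] at *
    split_ifs <;> omega

/-- As in the even case, with the last even path left unpaired: it stands still for one step
to fix its parity. -/
lemma exists_isImproperIntervalColoring_two (ht : Odd (numEven ℓ)) :
    ∃ c, (theta m ℓ).IsImproperIntervalColoring c 2 := by
  have hpar : Even (numEven ℓ - 1 - 0) := by simpa using Nat.Odd.sub_odd ht odd_one
  have hπ := pairSwap_involutive hpar
  have := numEven_le (ℓ := ℓ)
  refine exists_isImproperIntervalColoring_of_endpoints hℓ hone (pathPos ℓ)
    (fun i => pairSwap 0 (numEven ℓ - 1) (pathPos ℓ i) + 0)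
    (fun i => if pathPos ℓ i + 1 = numEven ℓ then 1 else 0) one_le_two pathPos_injective
    isIntervalSet_range_pathPos (injective_pathPos_comp hπ.injective 0)
    (isIntervalSet_range_pathPos_comp hπ (fun q => pairSwap_lt hpar (by omega)) 0)
    (fun i => ?_) (fun i => ?_) (fun _ _ => le_rfl)
  all_goals
    have := even_iff_pathPos_lt (ℓ := ℓ) i
    have := pathPos_lt (ℓ := ℓ) i
    have := hℓ i
    simp only [pairSwap, Nat.dist, Nat.even_iff, Nat.odd_iff] at *
    split_ifs <;> omega

end Colorings

/-- `θ_m` (`m ≥ 2`) has impropriety 2 if it is an Eulerian graph with an odd number of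
edges, and impropriety 1 otherwise. Here each path has length `ℓ i ≥ 1`, and at most
one path has length 1 (so the graph is simple). -/
theorem statement4 (m : ℕ) (hm : 2 ≤ m) (ℓ : Fin m → ℕ) (hℓ : ∀ i, 1 ≤ ℓ i)
    (hone : ∀ i j, ℓ i = 1 → ℓ j = 1 → i = j) :
    (theta m ℓ).muInt =
      if (theta m ℓ).Connected ∧ (∀ w, Even ((theta m ℓ).degree w)) ∧
          Odd (theta m ℓ).edgeFinset.card
      then 2 else 1 := by
  have hm0 : 0 < m := by omega
  have hzero := (theta m ℓ).not_isImproperIntervalColoring_zero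
    ((theta_adj_u_iff hℓ).2 ⟨⟨0, hm0⟩, rfl⟩)
  split_ifs with h
  · obtain ⟨-, hodd⟩ := (theta_eulerian_odd_iff hm0 hℓ hone).1 h
    refine muInt_eq_of_isLeast _ (exists_isImproperIntervalColoring_two hℓ hone hodd)
      fun j hj c hc => ?_
    interval_cases j
    · exact hzero c hc
    · exact Nat.not_even_iff_odd.2 h.2.2
        (even_card_edgeFinset_of_isImproperIntervalColoring_one _ h.2.1 hc)
  · refine muInt_eq_of_isLeast _ ?_ fun j hj c hc => ?_
    · rcases Nat.even_or_odd (numEven ℓ) with ht | ht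
      · exact exists_isImproperIntervalColoring_one_of_even hℓ hone ht
      · refine exists_isImproperIntervalColoring_one_of_odd hℓ hone ht ?_
        rw [← Nat.not_even_iff_odd]
        exact fun hmeven => h ((theta_eulerian_odd_iff hm0 hℓ hone).2 ⟨hmeven, ht⟩)
    · obtain rfl : j = 0 := by omega
      exact hzero c hc
end

section
/- Let T be a tree, let F(T) be its set of leaves, and let T̃ be the graph obtained from T by adding a new vertex u adjacent to all leaves of T. Let M(T) = max over all paths P in T of (|E(P)| + the number of edges of T with exactly one endpoint on P). If |F(T)| > k·(M(T) + 2), then μ_int(T̃) > k. -/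
open SimpleGraph

open scoped Classical

/-- The graph `T̃` obtained from `T` by adding a new vertex `u` adjacent to every
leaf of `T` (a vertex of degree 1). -/
noncomputable def tildeGraph {V : Type*} [Fintype V] (T : SimpleGraph V) :
    SimpleGraph (V ⊕ Unit) :=
  SimpleGraph.fromRel (fun a b =>
    (∃ x y, a = Sum.inl x ∧ b = Sum.inl y ∧ T.Adj x y) ∨
    (∃ x, a = Sum.inl x ∧ b = Sum.inr () ∧ T.degree x = 1))

/- ### Auxiliary lemmas -/

lemma tilde_adj_inl_inl {V : Type*} [Fintype V] (T : SimpleGraph V) (x y : V) :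
    (tildeGraph T).Adj (Sum.inl x) (Sum.inl y) ↔ T.Adj x y := by
  simp only [tildeGraph, fromRel_adj]
  constructor
  · rintro ⟨hne, (⟨a, b, ha, hb, hab⟩ | ⟨a, ha, hb, hd⟩) | (⟨a, b, ha, hb, hab⟩ | ⟨a, ha, hb, hd⟩)⟩
    · obtain rfl := Sum.inl.inj ha; obtain rfl := Sum.inl.inj hb; exact hab
    · simp at hb
    · obtain rfl := Sum.inl.inj ha; obtain rfl := Sum.inl.inj hb; exact hab.symm
    · simp at hb
  · intro hxy
    refine ⟨by simpa using hxy.ne, Or.inl (Or.inl ⟨x, y, rfl, rfl, hxy⟩)⟩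

lemma tilde_adj_inl_inr {V : Type*} [Fintype V] (T : SimpleGraph V) (x : V) :
    (tildeGraph T).Adj (Sum.inl x) (Sum.inr ()) ↔ T.degree x = 1 := by
  simp only [tildeGraph, fromRel_adj]
  constructor
  · rintro ⟨hne, (⟨a, b, ha, hb, hab⟩ | ⟨a, ha, hb, hd⟩) | (⟨a, b, ha, hb, hab⟩ | ⟨a, ha, hb, hd⟩)⟩
    · simp at hb
    · obtain rfl := Sum.inl.inj ha; exact hd
    · simp at ha
    · simp at ha
  · intro hd
    refine ⟨by simp, Or.inl (Or.inr ⟨x, rfl, by trivial, hd⟩)⟩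

lemma colorSpectrum_eq_image {W : Type*} (G : SimpleGraph W) (c : Sym2 W → ℕ) (v : W) :
    G.colorSpectrum c v = (fun w => c s(v, w)) '' G.neighborSet v := by
  ext n
  simp only [SimpleGraph.colorSpectrum, Set.mem_setOf_eq, Set.mem_image,
    SimpleGraph.mem_neighborSet]

lemma colorSpectrum_finite {W : Type*} [Fintype W] (G : SimpleGraph W) (c : Sym2 W → ℕ)
    (v : W) : (G.colorSpectrum c v).Finite := by
  rw [colorSpectrum_eq_image]
  exact (Set.toFinite _).image _

lemma interval_step {S : Set ℕ} (hS : S.Finite) (hi : IsIntervalSet S) {a b : ℕ}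
    (ha : a ∈ S) (hb : b ∈ S) : b ≤ a + (S.ncard - 1) := by
  rcases le_or_gt b a with hba | hab
  · omega
  · have hsub : Set.Icc a b ⊆ S := fun x hx => hi a ha b hb x hx.1 hx.2
    have hcard : (Set.Icc a b).ncard ≤ S.ncard := Set.ncard_le_ncard hsub hS
    rw [← Finset.coe_Icc, Set.ncard_coe_finset, Nat.card_Icc] at hcard
    omega

lemma spectrum_ncard_le_tilde {V : Type*} [Fintype V] (T : SimpleGraph V)
    (c : Sym2 (V ⊕ Unit) → ℕ) (z : V) :
    ((tildeGraph T).colorSpectrum c (Sum.inl z)).ncard ≤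
      T.degree z + (if T.degree z = 1 then 1 else 0) := by
  rw [colorSpectrum_eq_image]
  have hsub : (tildeGraph T).neighborSet (Sum.inl z) ⊆
      Sum.inl '' T.neighborSet z ∪ (if T.degree z = 1 then {Sum.inr ()} else ∅) := by
    intro w hw
    cases w with
    | inl y => exact Or.inl ⟨y, (tilde_adj_inl_inl T z y).mp hw, rfl⟩
    | inr u =>
        cases u
        have hd := (tilde_adj_inl_inr T z).mp hw
        right; simp [hd]
  have h1 : ((fun w => c s(Sum.inl z, w)) '' (tildeGraph T).neighborSet (Sum.inl z)).ncard ≤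
      ((tildeGraph T).neighborSet (Sum.inl z)).ncard := Set.ncard_image_le (Set.toFinite _)
  have h2 : ((tildeGraph T).neighborSet (Sum.inl z)).ncard ≤
      (Sum.inl '' T.neighborSet z ∪
        (if T.degree z = 1 then {Sum.inr ()} else ∅)).ncard :=
    Set.ncard_le_ncard hsub (Set.toFinite _)
  have h3 := Set.ncard_union_le (Sum.inl '' T.neighborSet z)
      (if T.degree z = 1 then ({Sum.inr ()} : Set (V ⊕ Unit)) else ∅)
  have h4 : ((Sum.inl '' T.neighborSet z : Set (V ⊕ Unit))).ncard = T.degree z := by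
    rw [Set.ncard_image_of_injective _ Sum.inl_injective, Set.ncard_eq_toFinset_card',
      Set.toFinset_card]
    exact T.card_neighborSet_eq_degree z
  have h5 : (if T.degree z = 1 then ({Sum.inr ()} : Set (V ⊕ Unit)) else ∅).ncard =
      (if T.degree z = 1 then 1 else 0) := by
    split <;> simp
  omega

lemma chain_bound {V : Type*} [Fintype V] (T : SimpleGraph V) (c : Sym2 (V ⊕ Unit) → ℕ)
    (hint : ∀ v, IsIntervalSet ((tildeGraph T).colorSpectrum c v)) :
    ∀ {x y : V} (q : T.Walk x y) (n n' : ℕ),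
      n ∈ (tildeGraph T).colorSpectrum c (Sum.inl x) →
      n' ∈ (tildeGraph T).colorSpectrum c (Sum.inl y) →
      n' ≤ n + (q.support.map fun z =>
        ((tildeGraph T).colorSpectrum c (Sum.inl z)).ncard - 1).sum := by
  intro x y q
  induction q with
  | nil =>
      intro n n' hn hn'
      have := interval_step (colorSpectrum_finite _ c _) (hint _) hn hn'
      simpa using this
  | @cons x x₁ y h' q' ih =>
      intro n n' hn hn'
      have hadj : (tildeGraph T).Adj (Sum.inl x) (Sum.inl x₁) := (tilde_adj_inl_inl T _ _).mpr h'
      have h1 : c s(Sum.inl x, Sum.inl x₁) ∈ (tildeGraph T).colorSpectrum c (Sum.inl x) :=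
        ⟨Sum.inl x₁, hadj, rfl⟩
      have h2 : c s(Sum.inl x, Sum.inl x₁) ∈ (tildeGraph T).colorSpectrum c (Sum.inl x₁) :=
        ⟨Sum.inl x, hadj.symm, by rw [Sym2.eq_swap]⟩
      have s1 := interval_step (colorSpectrum_finite _ c _) (hint _) hn h1
      have s2 := ih _ n' h2 hn'
      simp only [Walk.support_cons, List.map_cons, List.sum_cons]
      omega

lemma leaf_on_path {V : Type*} [Fintype V] {T : SimpleGraph V} {z : V} :
    ∀ {x y : V} (q : T.Walk x y), q.IsPath → z ∈ q.support → T.degree z = 1 →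
      z = x ∨ z = y := by
  intro x y q
  induction q with
  | nil => intro _ hz _; simp at hz; exact Or.inl hz
  | @cons x x₁ y h' q' ih =>
      intro hq hz hd
      rw [Walk.support_cons, List.mem_cons] at hz
      rcases hz with rfl | hz
      · exact Or.inl rfl
      · have hx : x ∉ q'.support := ((Walk.cons_isPath_iff _ _).mp hq).2
        rcases ih (hq.of_cons) hz hd with rfl | rfl
        · cases q' with
          | nil => exact Or.inr rfl
          | @cons _ x₂ _ h'' q'' =>
              exfalso
              have hxne : x ≠ x₂ := by
                intro hxx
                apply hx
                rw [hxx, Walk.support_cons]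
                exact List.mem_cons_of_mem _ q''.start_mem_support
              have hsub : ({x, x₂} : Finset V) ⊆ T.neighborFinset z := by
                intro a ha
                rw [Finset.mem_insert, Finset.mem_singleton] at ha
                rw [mem_neighborFinset]
                rcases ha with rfl | rfl
                · exact h'.symm
                · exact h''
              have h2 : 2 ≤ T.degree z := by
                rw [← card_neighborFinset_eq_degree]
                calc 2 = ({x, x₂} : Finset V).card := (Finset.card_pair hxne).symm
                  _ ≤ _ := Finset.card_le_card hsub
              omega
        · exact Or.inr rfl

lemma mem_edges_of_adj_support {V : Type*} {T : SimpleGraph V} (hac : T.IsAcyclic)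
    {x y a b : V} (q : T.Walk x y) (hq : q.IsPath) (hab : T.Adj a b)
    (ha : a ∈ q.support) (hb : b ∈ q.support) : s(a, b) ∈ q.edges := by
  have hsplit := q.take_spec ha
  have hb' : b ∈ (q.takeUntil a ha).support ∨ b ∈ (q.dropUntil a ha).support := by
    rw [← Walk.mem_support_append_iff, hsplit]
    exact hb
  rcases hb' with hbt | hbd
  · have hp : (((q.takeUntil a ha).dropUntil b hbt)).IsPath :=
      (hq.takeUntil ha).dropUntil hbt
    have heq : (⟨_, hp⟩ : T.Path b a) = Path.singleton hab.symm := hac.path_unique _ _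
    have hwalk : ((q.takeUntil a ha).dropUntil b hbt) = Walk.cons hab.symm Walk.nil := by
      have := congrArg Subtype.val heq
      simpa [Path.singleton] using this
    have hmem : s(b, a) ∈ ((q.takeUntil a ha).dropUntil b hbt).edges := by
      rw [hwalk]; simp
    rw [Sym2.eq_swap] at hmem
    exact q.edges_takeUntil_subset ha ((q.takeUntil a ha).edges_dropUntil_subset hbt hmem)
  · have hp : (((q.dropUntil a ha).takeUntil b hbd)).IsPath :=
      (hq.dropUntil ha).takeUntil hbd
    have heq : (⟨_, hp⟩ : T.Path a b) = Path.singleton hab := hac.path_unique _ _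
    have hwalk : ((q.dropUntil a ha).takeUntil b hbd) = Walk.cons hab Walk.nil := by
      have := congrArg Subtype.val heq
      simpa [Path.singleton] using this
    have hmem : s(a, b) ∈ ((q.dropUntil a ha).takeUntil b hbd).edges := by
      rw [hwalk]; simp
    exact q.edges_dropUntil_subset ha ((q.dropUntil a ha).edges_takeUntil_subset hbd hmem)

lemma sum_degree_support {V : Type*} [Fintype V] {T : SimpleGraph V} (hac : T.IsAcyclic)
    {x y : V} (q : T.Walk x y) (hq : q.IsPath) :
    ∑ z ∈ q.support.toFinset, T.degree z =
      2 * q.length + (T.edgeFinset.filter fun e =>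
        ∃ a b, e = s(a, b) ∧ a ∈ q.support ∧ b ∉ q.support).card := by
  classical
  set s := q.support.toFinset with hs
  set Ein := q.edges.toFinset with hEin
  set Eout := T.edgeFinset.filter (fun e =>
      ∃ a b, e = s(a, b) ∧ a ∈ q.support ∧ b ∉ q.support) with hEout
  have step1 : ∀ z, T.degree z = (T.edgeFinset.filter fun e => z ∈ e).card := by
    intro z
    rw [← card_incidenceFinset_eq_degree, incidenceFinset_eq_filter]
  have hsum1 : ∑ z ∈ s, T.degree z = ∑ e ∈ T.edgeFinset, (s.filter fun z => z ∈ e).card := by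
    calc ∑ z ∈ s, T.degree z = ∑ z ∈ s, ∑ e ∈ T.edgeFinset, if z ∈ e then 1 else 0 := by
          refine Finset.sum_congr rfl fun z _ => ?_
          rw [step1 z, Finset.card_filter]
      _ = ∑ e ∈ T.edgeFinset, ∑ z ∈ s, if z ∈ e then 1 else 0 := Finset.sum_comm
      _ = _ := by
          refine Finset.sum_congr rfl fun e _ => ?_
          rw [Finset.card_filter]
  have hEin_sub : Ein ⊆ T.edgeFinset := by
    intro e he
    rw [hEin, List.mem_toFinset] at he
    rw [mem_edgeFinset]
    exact q.edges_subset_edgeSet he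
  have hEout_sub : Eout ⊆ T.edgeFinset := Finset.filter_subset _ _
  have hdisj : Disjoint Ein Eout := by
    rw [Finset.disjoint_left]
    intro e hin hout
    rw [hEin, List.mem_toFinset] at hin
    rw [hEout, Finset.mem_filter] at hout
    obtain ⟨-, a, b, rfl, ha, hb⟩ := hout
    exact hb (q.snd_mem_support_of_mem_edges hin)
  have hval_in : ∀ e ∈ Ein, (s.filter fun z => z ∈ e).card = 2 := by
    intro e he
    rw [hEin, List.mem_toFinset] at he
    revert he
    induction e using Sym2.ind with
    | _ a b =>
        intro he
        have hadj : T.Adj a b := q.edges_subset_edgeSet he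
        have ha : a ∈ q.support := q.fst_mem_support_of_mem_edges he
        have hb : b ∈ q.support := q.snd_mem_support_of_mem_edges he
        have hfe : (s.filter fun z => z ∈ s(a, b)) = {a, b} := by
          ext z
          simp only [Finset.mem_filter, Sym2.mem_iff, Finset.mem_insert,
            Finset.mem_singleton, hs, List.mem_toFinset]
          constructor
          · rintro ⟨-, h⟩; exact h
          · rintro (rfl | rfl)
            · exact ⟨ha, Or.inl rfl⟩
            · exact ⟨hb, Or.inr rfl⟩
        rw [hfe, Finset.card_pair hadj.ne]
  have hval_out : ∀ e ∈ Eout, (s.filter fun z => z ∈ e).card = 1 := by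
    intro e he
    rw [hEout, Finset.mem_filter] at he
    obtain ⟨he', a, b, rfl, ha, hb⟩ := he
    have hfe : (s.filter fun z => z ∈ s(a, b)) = {a} := by
      ext z
      simp only [Finset.mem_filter, Sym2.mem_iff, Finset.mem_singleton, hs, List.mem_toFinset]
      constructor
      · rintro ⟨hzs, rfl | rfl⟩
        · rfl
        · exact absurd hzs hb
      · rintro rfl
        exact ⟨ha, Or.inl rfl⟩
    rw [hfe, Finset.card_singleton]
  have hval_zero : ∀ e ∈ T.edgeFinset, e ∉ Ein ∪ Eout → (s.filter fun z => z ∈ e).card = 0 := by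
    intro e he hne
    rw [Finset.mem_union, not_or] at hne
    obtain ⟨hnin, hnout⟩ := hne
    revert he hnin hnout
    induction e using Sym2.ind with
    | _ a b =>
        intro he hnin hnout
        rw [mem_edgeFinset] at he
        have hadj : T.Adj a b := he
        have ha : a ∉ q.support := by
          intro ha
          by_cases hb : b ∈ q.support
          · apply hnin
            rw [hEin, List.mem_toFinset]
            exact mem_edges_of_adj_support hac q hq hadj ha hb
          · apply hnout
            rw [hEout, Finset.mem_filter]
            exact ⟨mem_edgeFinset.mpr he, a, b, rfl, ha, hb⟩
        have hb : b ∉ q.support := by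
          intro hb
          by_cases ha' : a ∈ q.support
          · exact ha ha'
          · apply hnout
            rw [hEout, Finset.mem_filter]
            exact ⟨mem_edgeFinset.mpr he, b, a, Sym2.eq_swap, hb, ha'⟩
        rw [Finset.card_eq_zero]
        ext z
        simp only [Finset.mem_filter, Sym2.mem_iff, Finset.notMem_empty, iff_false, not_and,
          hs, List.mem_toFinset]
        rintro hzs (rfl | rfl)
        · exact ha hzs
        · exact hb hzs
  have hEin_card : Ein.card = q.length := by
    rw [hEin, List.toFinset_card_of_nodup (Walk.edges_nodup_of_support_nodup hq.support_nodup),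
      Walk.length_edges]
  rw [hsum1]
  rw [← Finset.sum_subset (Finset.union_subset hEin_sub hEout_sub)
    (fun e he hne => hval_zero e he hne)]
  rw [Finset.sum_union hdisj]
  rw [Finset.sum_congr rfl hval_in, Finset.sum_congr rfl hval_out]
  simp [hEin_card, Nat.mul_comm]

/-- If `T` is a tree and `|F(T)| > k(M(T) + 2)`, where `F(T)` is the set of leaves of
`T` and `M(T)` is the maximum over all paths `P` of `T` of `|E(P)|` plus the number of
edges of `T` with exactly one endpoint on `P`, then `μ_int(T̃) > k`. The condition
`|F(T)| > k(M(T) + 2)` is expressed by quantifying over all paths of `T`. -/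
theorem statement6 {V : Type*} [Fintype V] (T : SimpleGraph V) (hT : T.IsTree) (k : ℕ)
    (h : ∀ (x y : V) (p : T.Walk x y), p.IsPath →
        (Finset.univ.filter fun v : V => T.degree v = 1).card >
          k * ((p.length +
            (T.edgeFinset.filter fun e =>
              ∃ u w, e = s(u, w) ∧ u ∈ p.support ∧ w ∉ p.support).card) + 2)) :
    k < (tildeGraph T).muInt := by
  classical
  -- the defining set of `muInt` is nonempty
  have hSne : {k' | ∃ c : Sym2 (V ⊕ Unit) → ℕ,
      (tildeGraph T).IsImproperIntervalColoring c k'}.Nonempty := by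
    refine ⟨Fintype.card (V ⊕ Unit), fun _ => 0, ?_, ?_⟩
    · intro v n
      calc ({w | (tildeGraph T).Adj v w ∧ (fun _ => 0) s(v, w) = n}).ncard
          ≤ (Set.univ : Set (V ⊕ Unit)).ncard :=
            Set.ncard_le_ncard (Set.subset_univ _) Set.finite_univ
        _ = Fintype.card (V ⊕ Unit) := by rw [Set.ncard_univ, Nat.card_eq_fintype_card]
    · intro v a ha b hb x hax hxb
      obtain ⟨w1, hw1, ha0⟩ := ha
      obtain ⟨w2, hw2, hb0⟩ := hb
      have ha0' : (0 : ℕ) = a := ha0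
      have hb0' : (0 : ℕ) = b := hb0
      have hxa : x = a := by omega
      rw [hxa]
      exact ⟨w1, hw1, ha0⟩
  by_contra hk
  push_neg at hk
  have hk' : sInf {k' | ∃ c : Sym2 (V ⊕ Unit) → ℕ,
      (tildeGraph T).IsImproperIntervalColoring c k'} ≤ k := hk
  obtain ⟨c, hcol⟩ := Nat.sInf_mem hSne
  have hcard : ∀ v n, {w | (tildeGraph T).Adj v w ∧ c s(v, w) = n}.ncard ≤ k :=
    fun v n => le_trans (hcol.1 v n) hk'
  have hint := hcol.2
  set L := Finset.univ.filter (fun v : V => T.degree v = 1) with hL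
  obtain ⟨x0⟩ := hT.isConnected.nonempty
  have hLpos : 0 < L.card := Nat.lt_of_le_of_lt (Nat.zero_le _) (h x0 x0 Walk.nil Walk.IsPath.nil)
  have hLne : L.Nonempty := Finset.card_pos.mp hLpos
  set f : V → ℕ := fun x => c s(Sum.inr (), Sum.inl x) with hf
  obtain ⟨v, hvL, hvmin⟩ := L.exists_min_image f hLne
  obtain ⟨w, hwL, hwmax⟩ := L.exists_max_image f hLne
  have hvdeg : T.degree v = 1 := by simpa [hL] using hvL
  have hwdeg : T.degree w = 1 := by simpa [hL] using hwL
  have hdegpos : ∀ z : V, 1 ≤ T.degree z := by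
    intro z
    by_cases hzv : z = v
    · subst hzv; omega
    · obtain ⟨p⟩ := hT.isConnected.preconnected z v
      cases p with
      | nil => exact absurd rfl hzv
      | cons ha _ => exact (T.degree_pos_iff_exists_adj z).mpr ⟨_, ha⟩
  obtain ⟨p0⟩ := hT.isConnected.preconnected v w
  set q := p0.bypass with hq0
  have hq : q.IsPath := p0.bypass_isPath
  have hadj_v : (tildeGraph T).Adj (Sum.inl v) (Sum.inr ()) := (tilde_adj_inl_inr T v).mpr hvdeg
  have hadj_w : (tildeGraph T).Adj (Sum.inl w) (Sum.inr ()) := (tilde_adj_inl_inr T w).mpr hwdeg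
  have hfv : f v ∈ (tildeGraph T).colorSpectrum c (Sum.inl v) :=
    ⟨Sum.inr (), hadj_v, by rw [Sym2.eq_swap]⟩
  have hfw : f w ∈ (tildeGraph T).colorSpectrum c (Sum.inl w) :=
    ⟨Sum.inr (), hadj_w, by rw [Sym2.eq_swap]⟩
  have hchain := chain_bound T c hint q (f v) (f w) hfv hfw
  -- bound the chain sum
  have hnodup : q.support.Nodup := hq.support_nodup
  have hBsum : (q.support.map fun z =>
        ((tildeGraph T).colorSpectrum c (Sum.inl z)).ncard - 1).sum =
      ∑ z ∈ q.support.toFinset, (((tildeGraph T).colorSpectrum c (Sum.inl z)).ncard - 1) :=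
    (List.sum_toFinset _ hnodup).symm
  have hterm : ∀ z ∈ q.support.toFinset,
      ((tildeGraph T).colorSpectrum c (Sum.inl z)).ncard - 1 ≤
        (T.degree z - 1) + (if T.degree z = 1 then 1 else 0) := by
    intro z _
    have h1 := spectrum_ncard_le_tilde T c z
    have h2 := hdegpos z
    by_cases hdz : T.degree z = 1 <;> simp [hdz] at h1 ⊢ <;> omega
  have hsum_le : ∑ z ∈ q.support.toFinset,
        (((tildeGraph T).colorSpectrum c (Sum.inl z)).ncard - 1) ≤
      ∑ z ∈ q.support.toFinset, ((T.degree z - 1) + (if T.degree z = 1 then 1 else 0)) :=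
    Finset.sum_le_sum hterm
  have hsplit : ∑ z ∈ q.support.toFinset,
        ((T.degree z - 1) + (if T.degree z = 1 then 1 else 0)) =
      (∑ z ∈ q.support.toFinset, (T.degree z - 1)) +
        ∑ z ∈ q.support.toFinset, (if T.degree z = 1 then 1 else 0) :=
    Finset.sum_add_distrib
  have hite : ∑ z ∈ q.support.toFinset, (if T.degree z = 1 then 1 else 0) =
      (q.support.toFinset.filter fun z => T.degree z = 1).card :=
    (Finset.card_filter _ _).symm
  have hleaf_le : (q.support.toFinset.filter fun z => T.degree z = 1).card ≤ 2 := by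
    have hsub : (q.support.toFinset.filter fun z => T.degree z = 1) ⊆ {v, w} := by
      intro z hz
      rw [Finset.mem_filter, List.mem_toFinset] at hz
      rcases leaf_on_path q hq hz.1 hz.2 with rfl | rfl
      · simp
      · simp
    calc (q.support.toFinset.filter fun z => T.degree z = 1).card
        ≤ ({v, w} : Finset V).card := Finset.card_le_card hsub
      _ ≤ 2 := (Finset.card_insert_le _ _).trans (by simp)
  have hdegsum := sum_degree_support hT.IsAcyclic q hq
  have hcardsupp : q.support.toFinset.card = q.length + 1 := by
    rw [List.toFinset_card_of_nodup hnodup, Walk.length_support]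
  have hsub1 : (∑ z ∈ q.support.toFinset, (T.degree z - 1)) + q.support.toFinset.card =
      ∑ z ∈ q.support.toFinset, T.degree z := by
    calc (∑ z ∈ q.support.toFinset, (T.degree z - 1)) + q.support.toFinset.card
        = ∑ z ∈ q.support.toFinset, ((T.degree z - 1) + 1) := by
          rw [Finset.sum_add_distrib, Finset.sum_const, smul_eq_mul, mul_one]
      _ = ∑ z ∈ q.support.toFinset, T.degree z :=
          Finset.sum_congr rfl fun z _ => by have := hdegpos z; omega
  -- final counting at the apex
  have hmemIcc : ∀ x ∈ L, f x ∈ Finset.Icc (f v) (f w) :=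
    fun x hx => Finset.mem_Icc.mpr ⟨hvmin x hx, hwmax x hx⟩
  have hcount : L.card ≤ (Finset.Icc (f v) (f w)).card * k := by
    rw [Finset.card_eq_sum_card_fiberwise hmemIcc]
    have hfib : ∀ n ∈ Finset.Icc (f v) (f w), (L.filter fun x => f x = n).card ≤ k := by
      intro n _
      have hsubset : Sum.inl '' (↑(L.filter fun x => f x = n) : Set V) ⊆
          {w' | (tildeGraph T).Adj (Sum.inr ()) w' ∧ c s(Sum.inr (), w') = n} := by
        rintro _ ⟨x, hx, rfl⟩
        rw [Finset.mem_coe, Finset.mem_filter] at hx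
        obtain ⟨hxL, hfx⟩ := hx
        have hdx : T.degree x = 1 := by simpa [hL] using hxL
        exact ⟨((tilde_adj_inl_inr T x).mpr hdx).symm, hfx⟩
      calc (L.filter fun x => f x = n).card
          = (↑(L.filter fun x => f x = n) : Set V).ncard := (Set.ncard_coe_finset _).symm
        _ = (Sum.inl '' (↑(L.filter fun x => f x = n) : Set V)).ncard :=
            (Set.ncard_image_of_injective _ Sum.inl_injective).symm
        _ ≤ ({w' | (tildeGraph T).Adj (Sum.inr ()) w' ∧ c s(Sum.inr (), w') = n}).ncard :=
            Set.ncard_le_ncard hsubset (Set.toFinite _)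
        _ ≤ k := hcard (Sum.inr ()) n
    calc ∑ n ∈ Finset.Icc (f v) (f w), (L.filter fun x => f x = n).card
        ≤ ∑ _n ∈ Finset.Icc (f v) (f w), k := Finset.sum_le_sum hfib
      _ = (Finset.Icc (f v) (f w)).card * k := by rw [Finset.sum_const, smul_eq_mul]
  have hIcc : (Finset.Icc (f v) (f w)).card = f w + 1 - f v := Nat.card_Icc _ _
  have hfvw : f v ≤ f w := hvmin w hwL
  have hfinal := h v w q hq
  set out := (T.edgeFinset.filter fun e =>
      ∃ a b, e = s(a, b) ∧ a ∈ q.support ∧ b ∉ q.support).card with hout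
  -- span bound
  have hspan : f w + 1 - f v ≤ q.length + out + 2 := by
    rw [hBsum] at hchain
    omega
  have hle2 : L.card ≤ (q.length + out + 2) * k := by
    calc L.card ≤ (Finset.Icc (f v) (f w)).card * k := hcount
      _ = (f w + 1 - f v) * k := by rw [hIcc]
      _ ≤ (q.length + out + 2) * k := Nat.mul_le_mul_right k hspan
  rw [Nat.mul_comm] at hle2
  omega
end

section
/- For every positive integer k, there exists a bipartite simple graph G with μ_int(G) = k. -/
/-!
The witness for `k` has a root `u` joined to `r = 2k² - 1` branch vertices `uᵢ`, each `uᵢ` joined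
to `k` leaves `xᵢⱼ`, and all leaves joined to a single sink `v`; it is bipartite. Colouring the
edges `uuᵢ`, `uᵢxᵢⱼ`, `xᵢⱼv` with `i`, `i + 1`, `i + 2` is a `k`-improper interval colouring.
Conversely, in an interval colouring the colours at a vertex of degree `d` lie in a window of
length `d`. So the colours at `u` lie in `[m, m + r)`, and along `u – uᵢ – xᵢⱼ – v` a colour moves
by at most `k` and then by at most `1`: the `rk` edges at `v` see at most `r + 2k + 2` colours.
A `j`-improper colouring therefore needs `rk ≤ (r + 2k + 2) j`, which fails for `j ≤ k - 1`
since `(r + 2k + 2)(k - 1) = rk - 1`.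
-/

open SimpleGraph

theorem isIntervalSet_iff_ordConnected {S : Set ℕ} : IsIntervalSet S ↔ S.OrdConnected := by
  simp only [IsIntervalSet, Set.ordConnected_def, Set.subset_def, Set.mem_Icc, and_imp]

theorem IsIntervalSet.lt_add_ncard {S : Set ℕ} (hS : IsIntervalSet S) (hfin : S.Finite)
    {a b : ℕ} (ha : a ∈ S) (hb : b ∈ S) : b < a + S.ncard := by
  have hIcc : (Set.Icc a b).ncard ≤ S.ncard :=
    Set.ncard_le_ncard (fun x hx => hS a ha b hb x hx.1 hx.2) hfin
  have hpos : 0 < S.ncard := (Set.ncard_pos hfin).2 ⟨a, ha⟩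
  rw [Set.ncard_Icc_nat] at hIcc
  omega

theorem isIntervalSet_of_subset_Icc_succ {S : Set ℕ} {t : ℕ} (h : S ⊆ Set.Icc t (t + 1)) :
    IsIntervalSet S := by
  intro a ha b hb x hax hxb
  have ha' := h ha
  have hb' := h hb
  rw [Set.mem_Icc] at ha' hb'
  obtain rfl | rfl : x = a ∨ x = b := by omega
  exacts [ha, hb]

namespace SimpleGraph

variable {V W : Type*} {G : SimpleGraph V} {H : SimpleGraph W} {c : Sym2 V → ℕ} {k : ℕ} {v : V}

theorem IsImproperIntervalColoring.exists_forall_adj_mem_Ico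
    (h : G.IsImproperIntervalColoring c k) (hv : (G.neighborSet v).Finite) :
    ∃ m, ∀ w, G.Adj v w → c s(v, w) ∈ Set.Ico m (m + (G.neighborSet v).ncard) := by
  have hS : G.colorSpectrum c v = (fun w => c s(v, w)) '' G.neighborSet v := rfl
  have hcard : (G.colorSpectrum c v).ncard ≤ (G.neighborSet v).ncard :=
    hS ▸ Set.ncard_image_le hv
  refine ⟨sInf (G.colorSpectrum c v), fun w hw => ?_⟩
  have hmem : c s(v, w) ∈ G.colorSpectrum c v := ⟨w, hw, rfl⟩
  have hlt := (h.2 v).lt_add_ncard (hS ▸ hv.image _) (Nat.sInf_mem ⟨_, hmem⟩) hmem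
  exact ⟨Nat.sInf_le hmem, by omega⟩

theorem IsImproperIntervalColoring.ncard_neighborSet_le
    (h : G.IsImproperIntervalColoring c k) (hv : (G.neighborSet v).Finite) {t : Finset ℕ}
    (ht : ∀ w, G.Adj v w → c s(v, w) ∈ t) : (G.neighborSet v).ncard ≤ k * t.card := by
  rw [Set.ncard_eq_toFinset_card _ hv]
  refine Finset.card_le_mul_card_image_of_maps_to (fun w hw => ht w (by simpa using hw)) k
    fun n _ => ?_
  rw [← Set.ncard_coe_finset]
  convert h.1 v n using 2
  ext w
  simp

theorem IsImproperIntervalColoring.comap_iso (f : G ≃g H) {c : Sym2 W → ℕ}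
    (h : H.IsImproperIntervalColoring c k) :
    G.IsImproperIntervalColoring (c ∘ Sym2.map f) k := by
  refine ⟨fun v n => ?_, fun v => ?_⟩
  · have hpre : {w | G.Adj v w ∧ (c ∘ Sym2.map f) s(v, w) = n} =
        f ⁻¹' {w | H.Adj (f v) w ∧ c s(f v, w) = n} := by
      ext w; simp [f.map_adj_iff]
    rw [hpre, Set.ncard_preimage_of_injective_subset_range f.injective
      (by simp [f.surjective.range_eq])]
    exact h.1 (f v) n
  · have hspec : G.colorSpectrum (c ∘ Sym2.map f) v = H.colorSpectrum c (f v) := by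
      ext n
      simp only [colorSpectrum, Function.comp_apply, Sym2.map_mk]
      exact ⟨fun ⟨w, hw, hc⟩ => ⟨f w, f.map_adj_iff.2 hw, hc⟩, fun ⟨w, hw, hc⟩ =>
        ⟨f.symm w, by simpa [← f.map_adj_iff] using hw, by simpa using hc⟩⟩
    rw [hspec]
    exact h.2 (f v)

theorem Iso.muInt_eq (f : G ≃g H) : G.muInt = H.muInt := by
  unfold muInt
  congr 1
  ext j
  exact ⟨fun ⟨c, hc⟩ => ⟨_, hc.comap_iso f.symm⟩, fun ⟨c, hc⟩ => ⟨_, hc.comap_iso f⟩⟩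

end SimpleGraph

inductive FanVertex (r k : ℕ)
  | root
  | branch (i : Fin r)
  | leaf (i : Fin r) (j : Fin k)
  | sink
  deriving Fintype

namespace FanVertex

variable {r k : ℕ}

def Edge : FanVertex r k → FanVertex r k → Prop
  | root, branch _ => True
  | branch i, leaf i' _ => i = i'
  | leaf _ _, sink => True
  | _, _ => False

def side : FanVertex r k → Fin 2
  | root | leaf _ _ => 0
  | branch _ | sink => 1

def color : FanVertex r k → FanVertex r k → ℕ
  | root, branch i | branch i, root => i
  | branch _, leaf i _ | leaf i _, branch _ => i + 1
  | leaf i _, sink | sink, leaf i _ => i + 2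
  | _, _ => 0

end FanVertex

open FanVertex

def fanGraph (r k : ℕ) : SimpleGraph (FanVertex r k) := SimpleGraph.fromRel Edge

def fanColoring (r k : ℕ) : Sym2 (FanVertex r k) → ℕ :=
  Sym2.lift ⟨color, fun a b => by cases a <;> cases b <;> rfl⟩

section
variable {r k : ℕ}

@[simp] theorem fanColoring_mk (a b : FanVertex r k) : fanColoring r k s(a, b) = color a b := rfl

theorem fanGraph_neighborSet_root :
    (fanGraph r k).neighborSet root = Set.range branch := by
  ext w; cases w <;> simp [fanGraph, Edge]

theorem fanGraph_neighborSet_branch (i : Fin r) :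
    (fanGraph r k).neighborSet (branch i) = insert root (Set.range (leaf i)) := by
  ext w; cases w <;> simp [fanGraph, Edge, eq_comm]

theorem fanGraph_neighborSet_leaf (i : Fin r) (j : Fin k) :
    (fanGraph r k).neighborSet (leaf i j) = {branch i, sink} := by
  ext w; cases w <;> simp [fanGraph, Edge, eq_comm]

theorem fanGraph_neighborSet_sink :
    (fanGraph r k).neighborSet sink = Set.range fun p : Fin r × Fin k => leaf p.1 p.2 := by
  ext w; cases w <;> simp [fanGraph, Edge]

theorem fanGraph_ncard_neighborSet_root : ((fanGraph r k).neighborSet root).ncard = r := by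
  rw [fanGraph_neighborSet_root, Set.ncard_range_of_injective fun _ _ h => branch.inj h,
    Nat.card_eq_fintype_card, Fintype.card_fin]

theorem fanGraph_ncard_neighborSet_branch (i : Fin r) :
    ((fanGraph r k).neighborSet (branch i)).ncard = k + 1 := by
  rw [fanGraph_neighborSet_branch, Set.ncard_insert_of_notMem (by simp),
    Set.ncard_range_of_injective fun _ _ h => (leaf.inj h).2, Nat.card_eq_fintype_card,
    Fintype.card_fin]

theorem fanGraph_ncard_neighborSet_leaf (i : Fin r) (j : Fin k) :
    ((fanGraph r k).neighborSet (leaf i j)).ncard = 2 := by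
  rw [fanGraph_neighborSet_leaf, Set.ncard_pair (by simp)]

theorem fanGraph_ncard_neighborSet_sink : ((fanGraph r k).neighborSet sink).ncard = r * k := by
  rw [fanGraph_neighborSet_sink, Set.ncard_range_of_injective fun p q h => ?_,
    Nat.card_eq_fintype_card, Fintype.card_prod, Fintype.card_fin, Fintype.card_fin]
  obtain ⟨h1, h2⟩ := leaf.inj h
  exact Prod.ext h1 h2

theorem fanGraph_colorable_two : (fanGraph r k).Colorable 2 :=
  ⟨Coloring.mk side fun {a b} h => by
    cases a <;> cases b <;> simp_all [fanGraph, Edge, side]⟩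

theorem fanGraph_colorSpectrum_root :
    (fanGraph r k).colorSpectrum (fanColoring r k) root = Set.Iio r := by
  ext n
  simp only [colorSpectrum, ← mem_neighborSet, fanGraph_neighborSet_root]
  constructor
  · rintro ⟨_, ⟨i, rfl⟩, rfl⟩
    exact i.isLt
  · intro hn
    exact ⟨_, ⟨⟨n, hn⟩, rfl⟩, rfl⟩

theorem fanGraph_colorSpectrum_branch_subset (i : Fin r) :
    (fanGraph r k).colorSpectrum (fanColoring r k) (branch i) ⊆ Set.Icc i (i + 1) := by
  rintro n ⟨w, hw, rfl⟩
  rw [← mem_neighborSet, fanGraph_neighborSet_branch] at hw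
  rcases hw with rfl | ⟨j, rfl⟩ <;> simp [color]

theorem fanGraph_colorSpectrum_leaf_subset (i : Fin r) (j : Fin k) :
    (fanGraph r k).colorSpectrum (fanColoring r k) (leaf i j) ⊆
      Set.Icc (i + 1) (i + 1 + 1) := by
  rintro n ⟨w, hw, rfl⟩
  rw [← mem_neighborSet, fanGraph_neighborSet_leaf] at hw
  rcases hw with rfl | rfl <;> simp [color]

theorem fanGraph_colorSpectrum_sink (hk : 0 < k) :
    (fanGraph r k).colorSpectrum (fanColoring r k) sink = Set.Ico 2 (r + 2) := by
  ext n
  simp only [colorSpectrum, ← mem_neighborSet, fanGraph_neighborSet_sink]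
  constructor
  · rintro ⟨_, ⟨⟨i, j⟩, rfl⟩, rfl⟩
    simp [color]
  · rintro ⟨h2, hn⟩
    refine ⟨_, ⟨(⟨n - 2, by omega⟩, ⟨0, hk⟩), rfl⟩, ?_⟩
    simp [color]
    omega

theorem fanGraph_ncard_sameColor_le (hk : 0 < k) (v : FanVertex r k) (n : ℕ) :
    {w | (fanGraph r k).Adj v w ∧ fanColoring r k s(v, w) = n}.ncard ≤ k := by
  have range_leaf (i : Fin r) : (Set.range (leaf i : Fin k → FanVertex r k)).ncard = k := by
    rw [Set.ncard_range_of_injective fun _ _ h => (leaf.inj h).2, Nat.card_eq_fintype_card,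
      Fintype.card_fin]
  set F := {w | (fanGraph r k).Adj v w ∧ fanColoring r k s(v, w) = n} with hF
  suffices h : (∃ i, F ⊆ Set.range (leaf i)) ∨ F.Subsingleton by
    rcases h with ⟨i, hi⟩ | h
    · exact (Set.ncard_le_ncard hi).trans (range_leaf i).le
    · exact (Set.ncard_le_one_iff_subsingleton.2 h).trans hk
  simp only [hF, ← mem_neighborSet, fanColoring_mk]
  cases v with
  | root =>
    right
    rintro _ ⟨ha, rfl⟩ _ ⟨hb, hab⟩
    rw [fanGraph_neighborSet_root] at ha hb
    obtain ⟨i, rfl⟩ := ha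
    obtain ⟨i', rfl⟩ := hb
    simp_all [color, Fin.val_inj]
  | branch i =>
    by_cases hn : n = i + 1
    · left
      refine ⟨i, fun w ⟨hw, hc⟩ => ?_⟩
      rw [fanGraph_neighborSet_branch] at hw
      rcases hw with rfl | hw
      · simp [color] at hc; omega
      · exact hw
    · right
      rintro _ ⟨ha, rfl⟩ _ ⟨hb, hab⟩
      rw [fanGraph_neighborSet_branch] at ha hb
      rcases ha with rfl | ⟨j, rfl⟩ <;> rcases hb with rfl | ⟨j', rfl⟩ <;> simp_all [color]
  | leaf i j =>
    right
    rintro _ ⟨ha, rfl⟩ _ ⟨hb, hab⟩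
    rw [fanGraph_neighborSet_leaf] at ha hb
    rcases ha with rfl | rfl <;> rcases hb with rfl | rfl <;> simp_all [color]
  | sink =>
    by_cases hn : ∃ i : Fin r, n = i + 2
    · obtain ⟨i, rfl⟩ := hn
      left
      refine ⟨i, fun w ⟨hw, hc⟩ => ?_⟩
      rw [fanGraph_neighborSet_sink] at hw
      obtain ⟨⟨i', j⟩, rfl⟩ := hw
      obtain rfl : i' = i := by simpa [color, Fin.val_inj] using hc
      exact ⟨j, rfl⟩
    · right
      rintro _ ⟨ha, rfl⟩
      rw [fanGraph_neighborSet_sink] at ha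
      obtain ⟨⟨i, j⟩, rfl⟩ := ha
      exact absurd ⟨i, rfl⟩ hn

theorem fanColoring_isImproperIntervalColoring (hk : 0 < k) :
    (fanGraph r k).IsImproperIntervalColoring (fanColoring r k) k := by
  refine ⟨fanGraph_ncard_sameColor_le hk, fun v => ?_⟩
  cases v with
  | root => rw [fanGraph_colorSpectrum_root, isIntervalSet_iff_ordConnected]; infer_instance
  | branch i => exact isIntervalSet_of_subset_Icc_succ (fanGraph_colorSpectrum_branch_subset i)
  | leaf i j => exact isIntervalSet_of_subset_Icc_succ (fanGraph_colorSpectrum_leaf_subset i j)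
  | sink =>
    rw [fanGraph_colorSpectrum_sink hk, isIntervalSet_iff_ordConnected]; infer_instance

theorem fanGraph_not_isImproperIntervalColoring {j : ℕ} (hj : (r + 2 * k + 2) * j < r * k)
    (c : Sym2 (FanVertex r k) → ℕ) : ¬ (fanGraph r k).IsImproperIntervalColoring c j := by
  intro h
  have hfin (v : FanVertex r k) : ((fanGraph r k).neighborSet v).Finite := Set.toFinite _
  obtain ⟨m, hm⟩ := h.exists_forall_adj_mem_Ico (hfin root)
  rw [fanGraph_ncard_neighborSet_root] at hm
  have window (i : Fin r) (l : Fin k) :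
      c s(sink, leaf i l) ∈ Finset.Icc (m - (k + 1)) (m + r + k) := by
    obtain ⟨m₁, hm₁⟩ := h.exists_forall_adj_mem_Ico (hfin (branch i))
    obtain ⟨m₂, hm₂⟩ := h.exists_forall_adj_mem_Ico (hfin (leaf i l))
    rw [fanGraph_ncard_neighborSet_branch] at hm₁
    rw [fanGraph_ncard_neighborSet_leaf] at hm₂
    have h₀ := hm (branch i) (by simp [fanGraph, Edge])
    have h₁ := hm₁ root (by simp [fanGraph, Edge])
    have h₂ := hm₁ (leaf i l) (by simp [fanGraph, Edge])
    have h₃ := hm₂ (branch i) (by simp [fanGraph, Edge])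
    have h₄ := hm₂ sink (by simp [fanGraph, Edge])
    rw [Sym2.eq_swap] at h₁ h₃
    rw [Sym2.eq_swap, Finset.mem_Icc]
    simp only [Set.mem_Ico] at h₀ h₁ h₂ h₃ h₄
    omega
  have hpigeon := h.ncard_neighborSet_le (hfin sink) fun w hw => by
    rw [← mem_neighborSet, fanGraph_neighborSet_sink] at hw
    obtain ⟨⟨i, l⟩, rfl⟩ := hw
    exact window i l
  rw [fanGraph_ncard_neighborSet_sink, Nat.card_Icc] at hpigeon
  have hwidth : j * (m + r + k + 1 - (m - (k + 1))) ≤ (r + 2 * k + 2) * j := by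
    rw [mul_comm]; exact Nat.mul_le_mul_right j (by omega)
  omega

end

theorem fanGraph_muInt {k : ℕ} (hk : 0 < k) : (fanGraph (2 * k ^ 2 - 1) k).muInt = k := by
  have hcol := fanColoring_isImproperIntervalColoring (r := 2 * k ^ 2 - 1) hk
  refine le_antisymm (Nat.sInf_le ⟨_, hcol⟩) (le_csInf ⟨k, _, hcol⟩ fun j ⟨c, hc⟩ => ?_)
  by_contra! hj
  refine fanGraph_not_isImproperIntervalColoring ?_ c hc
  obtain ⟨k, rfl⟩ := Nat.exists_eq_add_one_of_ne_zero hk.ne'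
  have hr : 2 * (k + 1) ^ 2 - 1 = 2 * k ^ 2 + 4 * k + 1 := by ring_nf; omega
  rw [hr]
  nlinarith

/-- For every positive integer `k` there is a (finite) bipartite simple graph whose
interval coloring impropriety is exactly `k`. -/
theorem statement7 (k : ℕ) (hk : 0 < k) :
    ∃ (n : ℕ) (G : SimpleGraph (Fin n)), G.Colorable 2 ∧ G.muInt = k := by
  let e := (fanGraph (2 * k ^ 2 - 1) k).overFinIso rfl
  exact ⟨_, _, fanGraph_colorable_two.of_hom e.symm.toHom,
    e.muInt_eq.symm.trans (fanGraph_muInt hk)⟩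
end

section
/- If G is a bipartite simple graph with minimum degree δ(G) ≥ 1, then μ_int(G) ≤ ⌈Δ(G)/δ(G)⌉, where Δ(G) and δ(G) denote the maximum and minimum degree of G. -/
open SimpleGraph

/-!
Let `t = δ(G)` and `k = ⌈Δ(G)/t⌉`. Split every vertex `v` into `k` copies and distribute its
edges among them so that each copy receives at most `t` edges and one copy exactly `t`. The split
graph is still bipartite and has maximum degree `t`, so by König's theorem (here derived from
Hall's theorem via an integral Birkhoff–von Neumann decomposition) it has a proper edge colouring
with colours `0, …, t - 1`. In `G` each colour then appears at most once per copy, hence at most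
`k` times at `v`, while the copy of degree `t` already sees every colour; so the colours at every
vertex form the interval `[0, t)`.
-/

open Finset

section LineSums

variable {α β : Type*} [Fintype α] [Fintype β] {D : ℕ} {m : α → β → ℕ}

lemma card_eq_card_of_lineSums_eq (hD : 0 < D) (hrow : ∀ a, ∑ b, m a b = D)
    (hcol : ∀ b, ∑ a, m a b = D) : Fintype.card α = Fintype.card β := by
  have h := Finset.sum_comm (s := univ) (t := univ) (f := m)
  simp only [hrow, hcol, sum_const, card_univ, smul_eq_mul] at h
  exact Nat.eq_of_mul_eq_mul_right hD h

lemma card_le_card_biUnion_support [DecidableEq β] (hD : 0 < D) (hrow : ∀ a, ∑ b, m a b = D)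
    (hcol : ∀ b, ∑ a, m a b = D) (s : Finset α) :
    #s ≤ #(s.biUnion fun a => {b | 0 < m a b}) := by
  set N := s.biUnion fun a => ({b | 0 < m a b} : Finset β)
  have hsupp : ∀ a ∈ s, ∀ b ∉ N, m a b = 0 := fun a ha b hb =>
    Nat.eq_zero_of_not_pos fun h => hb (mem_biUnion.2 ⟨a, ha, by simpa using h⟩)
  refine Nat.le_of_mul_le_mul_left ?_ hD
  calc D * #s = ∑ a ∈ s, ∑ b, m a b := by simp [hrow, mul_comm]
    _ = ∑ a ∈ s, ∑ b ∈ N, m a b :=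
      sum_congr rfl fun a ha => (sum_subset (subset_univ N) fun b _ hb => hsupp a ha b hb).symm
    _ = ∑ b ∈ N, ∑ a ∈ s, m a b := sum_comm
    _ ≤ ∑ b ∈ N, ∑ a, m a b := sum_le_sum fun b _ => sum_le_sum_of_subset (subset_univ s)
    _ = D * #N := by simp [hcol, mul_comm]

lemma exists_equiv_forall_pos_of_lineSums_eq (hD : 0 < D) (hrow : ∀ a, ∑ b, m a b = D)
    (hcol : ∀ b, ∑ a, m a b = D) : ∃ e : α ≃ β, ∀ a, 0 < m a (e a) := by
  classical
  obtain ⟨f, hinj, hf⟩ := (all_card_le_biUnion_card_iff_exists_injective _).1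
    (card_le_card_biUnion_support hD hrow hcol)
  have hbij := (Fintype.bijective_iff_injective_and_card f).2
    ⟨hinj, card_eq_card_of_lineSums_eq hD hrow hcol⟩
  exact ⟨Equiv.ofBijective f hbij, fun a => by simpa using hf a⟩

/-- Birkhoff–von Neumann over `ℕ`. -/
theorem exists_equivs_of_lineSums_eq [DecidableEq β] :
    ∀ {D : ℕ} (m : α → β → ℕ), (∀ a, ∑ b, m a b = D) → (∀ b, ∑ a, m a b = D) →
      ∃ P : Fin D → α ≃ β, ∀ a b, m a b = #{c | P c a = b}
  | 0, m, hrow, _ => ⟨Fin.elim0, fun a b => by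
      simpa using (single_le_sum (fun b _ => Nat.zero_le _) (mem_univ b)).trans (hrow a).le⟩
  | D + 1, m, hrow, hcol => by
    obtain ⟨e, he⟩ := exists_equiv_forall_pos_of_lineSums_eq D.succ_pos hrow hcol
    set m' : α → β → ℕ := fun a b => m a b - if e a = b then 1 else 0
    have hm : ∀ a b, m a b = m' a b + if e a = b then 1 else 0 := by
      intro a b
      by_cases h : e a = b
      · subst h
        have := he a
        simp only [m', if_true]
        omega
      · simp [m', h]
    have hrow' : ∀ a, ∑ b, m' a b = D := by
      intro a
      have := hrow a
      simp only [hm, sum_add_distrib, sum_ite_eq, mem_univ, if_true] at this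
      omega
    have hcol' : ∀ b, ∑ a, m' a b = D := by
      intro b
      have hone : ∑ a, (if e a = b then 1 else 0) = 1 := by
        rw [← e.symm.sum_comp]
        simp
      have := hcol b
      simp only [hm, sum_add_distrib, hone] at this
      omega
    obtain ⟨P, hP⟩ := exists_equivs_of_lineSums_eq m' hrow' hcol'
    refine ⟨Fin.cons e P, fun a b => ?_⟩
    rw [Fin.card_filter_univ_succ', hm, hP]
    simp [add_comm]

end LineSums

section Konig

variable {α β : Type*} [Fintype α] [Fintype β] [DecidableEq α] [DecidableEq β]
  (R : α → β → Prop) [DecidableRel R] (D : ℕ)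

/-- The biadjacency matrix of `R` next to a transposed copy of it, completed by diagonal
blocks to the biadjacency matrix of a `D`-regular bipartite multigraph. -/
def paddedIncidence : α ⊕ β → β ⊕ α → ℕ
  | .inl a, .inl b => if R a b then 1 else 0
  | .inl a, .inr a' => if a = a' then D - #{b | R a b} else 0
  | .inr b', .inl b => if b' = b then D - #{a | R a b} else 0
  | .inr b, .inr a => if R a b then 1 else 0

variable {R D}

lemma sum_paddedIncidence_row (hα : ∀ a, #{b | R a b} ≤ D) (hβ : ∀ b, #{a | R a b} ≤ D)
    (x : α ⊕ β) : ∑ y, paddedIncidence R D x y = D := by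
  cases x with
  | inl a => simp [paddedIncidence, Fintype.sum_sum_type, sum_boole, hα a]
  | inr b => simp [paddedIncidence, Fintype.sum_sum_type, sum_boole, hβ b]

lemma sum_paddedIncidence_col (hα : ∀ a, #{b | R a b} ≤ D) (hβ : ∀ b, #{a | R a b} ≤ D)
    (y : β ⊕ α) : ∑ x, paddedIncidence R D x y = D := by
  cases y with
  | inl b => simp [paddedIncidence, Fintype.sum_sum_type, sum_boole, hβ b]
  | inr a => simp [paddedIncidence, Fintype.sum_sum_type, sum_boole, hα a]

/-- König's edge colouring theorem for bipartite graphs, in the form of a relation. -/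
theorem exists_coloring_injOn_of_degree_le (hα : ∀ a, #{b | R a b} ≤ D)
    (hβ : ∀ b, #{a | R a b} ≤ D) :
    ∃ col : α → β → ℕ, (∀ a b, R a b → col a b < D) ∧
      (∀ a, Set.InjOn (col a) {b | R a b}) ∧ ∀ b, Set.InjOn (col · b) {a | R a b} := by
  obtain ⟨P, hP⟩ := exists_equivs_of_lineSums_eq (paddedIncidence R D)
    (sum_paddedIncidence_row hα hβ) (sum_paddedIncidence_col hα hβ)
  have hex : ∀ a b, R a b → ∃ c : ℕ, ∃ hc : c < D, P ⟨c, hc⟩ (.inl a) = .inl b := by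
    intro a b h
    have : 0 < #{c | P c (.inl a) = .inl b} := by rw [← hP]; simp [paddedIncidence, h]
    obtain ⟨c, hc⟩ := card_pos.1 this
    exact ⟨c, c.2, by simpa using hc⟩
  choose! col hlt hcol using hex
  refine ⟨col, hlt, fun a b hb b' hb' h => ?_, fun b a ha a' ha' h => ?_⟩
  · have e : (⟨col a b, hlt a b hb⟩ : Fin D) = ⟨col a b', hlt a b' hb'⟩ := Fin.ext h
    exact Sum.inl_injective (by rw [← hcol a b hb, e, hcol a b' hb'])
  · have e : (⟨col a b, hlt a b ha⟩ : Fin D) = ⟨col a' b, hlt a' b ha'⟩ := Fin.ext h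
    exact Sum.inl_injective ((P _).injective (by rw [hcol a b ha, e, hcol a' b ha']))

end Konig

lemma Finset.exists_fiber_card_le {α : Type*} (s : Finset α) {t k : ℕ} (ht : 0 < t)
    (hts : t ≤ #s) (hsk : #s ≤ t * k) :
    ∃ f : α → Fin k, (∀ i, #{x ∈ s | f x = i} ≤ t) ∧ ∃ i, t ≤ #{x ∈ s | f x = i} := by
  classical
  have hk : 0 < k := Nat.pos_of_ne_zero fun hk => by rw [hk, mul_zero] at hsk; omega
  let idx : α → ℕ := fun x => if h : x ∈ s then s.equivFin ⟨x, h⟩ else 0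
  have idx_lt : ∀ x, idx x < #s := fun x => by
    by_cases h : x ∈ s
    · simp [idx, h]
    · simpa [idx, h] using ht.trans_le hts
  have idx_inj : Set.InjOn idx s := fun x hx y hy h => by
    simpa [idx, mem_coe.1 hx, mem_coe.1 hy, Fin.val_inj] using h
  have idx_surj : ∀ n < #s, ∃ x ∈ s, idx x = n := fun n hn =>
    ⟨s.equivFin.symm ⟨n, hn⟩, by simp [idx]⟩
  let f : α → Fin k := fun x =>
    ⟨idx x / t, (Nat.div_lt_iff_lt_mul ht).2 ((idx_lt x).trans_le (hsk.trans_eq (mul_comm t k)))⟩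
  have hfiber : ∀ i : Fin k, {x ∈ s | f x = i} = {x ∈ s | idx x / t = i} := fun i => by
    simp [f, Fin.ext_iff]
  refine ⟨f, fun i => ?_, ⟨0, hk⟩, ?_⟩
  · rw [hfiber]
    refine (card_le_card_of_injOn (t := range t) (fun x => idx x % t)
      (fun x _ => by simp [Nat.mod_lt _ ht]) fun x hx y hy h => ?_).trans_eq (card_range t)
    simp only [coe_filter] at hx hy
    refine idx_inj hx.1 hy.1 ?_
    rw [← Nat.div_add_mod (idx x) t, ← Nat.div_add_mod (idx y) t, hx.2, hy.2]
    exact congrArg _ h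
  · rw [hfiber, ← card_range t]
    refine card_le_card_of_surjOn idx fun n hn => ?_
    obtain ⟨x, hx, rfl⟩ := idx_surj n (by simp at hn; omega)
    exact ⟨x, by simpa [hx] using Nat.div_eq_of_lt (by simpa using hn), rfl⟩

namespace SimpleGraph

variable {V : Type*} [Fintype V] (G : SimpleGraph V) [DecidableRel G.Adj] {t k : ℕ}

lemma exists_edgeColoring_injOn_block_color (S : Set V) (hS : ∀ ⦃u v⦄, G.Adj u v → (u ∈ S ↔ v ∉ S))
    (blk : V → V → Fin k) (hblk : ∀ v i, #{w ∈ G.neighborFinset v | blk v w = i} ≤ t) :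
    ∃ c : Sym2 V → ℕ, (∀ v w, G.Adj v w → c s(v, w) < t) ∧
      ∀ v, Set.InjOn (fun w => (blk v w, c s(v, w))) (G.neighborSet v) := by
  classical
  let copy : V → V → V × Fin k := fun v w => (v, blk v w)
  let R : V × Fin k → V × Fin k → Prop := fun p q =>
    G.Adj p.1 q.1 ∧ p.1 ∈ S ∧ blk p.1 q.1 = p.2 ∧ blk q.1 p.1 = q.2
  have hrow : ∀ p, #{q | R p q} ≤ t := fun p =>
    (card_le_card_of_injOn Prod.fst (fun q hq => by simp_all [R])
      fun q hq q' hq' h => by simp_all [R, Prod.ext_iff]).trans (hblk p.1 p.2)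
  have hcol : ∀ q, #{p | R p q} ≤ t := fun q =>
    (card_le_card_of_injOn Prod.fst (fun p hp => by simp_all [R, adj_comm])
      fun p hp p' hp' h => by simp_all [R, Prod.ext_iff]).trans (hblk q.1 q.2)
  obtain ⟨col, hlt, hinj_row, hinj_col⟩ := exists_coloring_injOn_of_degree_le hrow hcol
  let g : V → V → ℕ := fun u v => if u ∈ S then col (copy u v) (copy v u) else 0
  -- an edge takes the colour given to it at its endpoint in `S`; the other summand vanishes
  let c : Sym2 V → ℕ := Sym2.lift ⟨fun u v => g u v + g v u, fun u v => add_comm _ _⟩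
  have hR : ∀ ⦃u v⦄, G.Adj u v → u ∈ S → R (copy u v) (copy v u) :=
    fun u v h hu => ⟨h, hu, rfl, rfl⟩
  have hc : ∀ ⦃u v⦄, G.Adj u v → u ∈ S → c s(u, v) = col (copy u v) (copy v u) := fun u v h hu => by
    simp [c, g, hu, (hS h).1 hu]
  refine ⟨c, fun v w h => ?_, fun v w hw w' hw' h => ?_⟩
  · by_cases hv : v ∈ S
    · exact hc h hv ▸ hlt _ _ (hR h hv)
    · have hw := (hS h.symm).2 hv
      exact Sym2.eq_swap ▸ hc h.symm hw ▸ hlt _ _ (hR h.symm hw)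
  · simp only [Prod.mk.injEq] at h
    have hcopy : copy v w = copy v w' := by simp [copy, h.1]
    by_cases hv : v ∈ S
    · rw [hc hw hv, hc hw' hv, hcopy] at h
      exact congrArg Prod.fst (hinj_row _ (hcopy ▸ hR hw hv) (hR hw' hv) h.2)
    · have hwS : w ∈ S := (hS (adj_symm G hw)).2 hv
      have hw'S : w' ∈ S := (hS (adj_symm G hw')).2 hv
      rw [Sym2.eq_swap, hc (adj_symm G hw) hwS, Sym2.eq_swap, hc (adj_symm G hw') hw'S,
        hcopy] at h
      exact congrArg Prod.fst
        (hinj_col _ (hcopy ▸ hR (adj_symm G hw) hwS) (hR (adj_symm G hw') hw'S) h.2)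

lemma isImproperIntervalColoring_of_blocks {c : Sym2 V → ℕ} {blk : V → V → Fin k}
    (hlt : ∀ v w, G.Adj v w → c s(v, w) < t)
    (hinj : ∀ v, Set.InjOn (fun w => (blk v w, c s(v, w))) (G.neighborSet v))
    (hfull : ∀ v, ∃ i, t ≤ #{w ∈ G.neighborFinset v | blk v w = i}) :
    G.IsImproperIntervalColoring c k := by
  have hspec : ∀ v, G.colorSpectrum c v = Set.Iio t := by
    intro v
    ext n
    refine ⟨fun ⟨w, hw, hn⟩ => hn ▸ hlt v w hw, fun hn => ?_⟩
    obtain ⟨i, hi⟩ := hfull v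
    have hsurj := surjOn_of_injOn_of_card_le (s := {w ∈ G.neighborFinset v | blk v w = i})
      (t := range t) (fun w => c s(v, w))
      (fun w hw => by simp_all) (fun w hw w' hw' h => by
        simp only [coe_filter, mem_neighborFinset, Set.mem_ofPred_eq] at hw hw'
        exact hinj v hw.1 hw'.1 (Prod.ext (hw.2.trans hw'.2.symm) h))
      (by simpa using hi)
    obtain ⟨w, hw, hwn⟩ := hsurj (by simpa using hn)
    exact ⟨w, by simp_all, hwn⟩
  refine ⟨fun v n => ?_, fun v => ?_⟩
  · calc _ ≤ (Set.univ : Set (Fin k)).ncard :=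
          Set.ncard_le_ncard_of_injOn (blk v) (fun _ _ => Set.mem_univ _)
            fun w hw w' hw' h => hinj v hw.1 hw'.1 (Prod.ext h (hw.2.trans hw'.2.symm))
      _ = k := by simp
  · rw [hspec v]
    exact fun a _ b hb n _ hnb => hnb.trans_lt hb

end SimpleGraph

/-- If `G` is bipartite with minimum degree at least 1, then
`μ_int(G) ≤ ⌈Δ(G)/δ(G)⌉`. -/
theorem statement8 {V : Type*} [Fintype V] (G : SimpleGraph V) [DecidableRel G.Adj]
    (hbip : G.Colorable 2) (hδ : 1 ≤ G.minDegree) :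
    G.muInt ≤ (G.maxDegree + G.minDegree - 1) / G.minDegree := by
  obtain ⟨C⟩ := hbip
  have hΔ : G.maxDegree ≤ G.minDegree * ((G.maxDegree + G.minDegree - 1) / G.minDegree) := by
    have := Nat.lt_div_mul_add (a := G.maxDegree + G.minDegree - 1) hδ
    rw [mul_comm]
    omega
  choose blk hblk hfull using fun v => (G.neighborFinset v).exists_fiber_card_le hδ
    (by simpa using G.minDegree_le_degree v)
    (by simpa using (G.degree_le_maxDegree v).trans hΔ)
  obtain ⟨c, hlt, hinj⟩ := G.exists_edgeColoring_injOn_block_color {v | C v = 0}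
    (fun u v h => by have := C.valid h; show C u = 0 ↔ C v ≠ 0; omega) blk hblk
  exact Nat.sInf_le ⟨c, G.isImproperIntervalColoring_of_blocks hlt hinj hfull⟩
end

section
/- If G is a bipartite simple graph (with at least one edge), then μ_int(G) ≤ ⌈Δ(G)/3⌉, where Δ(G) is the maximum degree of G. -/
open SimpleGraph

/-! Let `k = ⌈Δ/3⌉`. A bipartite graph of maximum degree at most `a + b` has an edge coloring
`g` with values in `Bool` with at most `a` edges of color `true` and `b` of color `false` at every
vertex: orient the edges by the bipartition and the colors, take a coloring of least total
excess, and note that if some vertex were overloaded, counting arcs shows that some vertex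
reachable from it is underloaded, and reversing a directed path between the two lowers the
excess.

Split `G` this way with `(a, b) = (k, 2k)` and keep the `true` edges only at vertices of degree
`> 2k`; the remaining graph `H` has maximum degree `≤ 2k`, so it splits again with
`(a, b) = (k, k)` into colors `2` and `3`, and every vertex of degree `> 2k` sees both. The
removed edges get color `1`, or `4` if an endpoint sees only color `3` in `H`; as each removed
edge has an endpoint seeing both `2` and `3`, the colors at every vertex form an interval. -/

open Finset

lemma isIntervalSet_of_subset_Icc {S : Set ℕ} (hS : S ⊆ Set.Icc 1 4) (h4 : 4 ∈ S → 3 ∈ S)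
    (h13 : 1 ∈ S → 3 ∈ S → 2 ∈ S) : IsIntervalSet S := by
  intro m hm n hn x hmx hxn
  have hm' := hS hm
  have hn' := hS hn
  simp only [Set.mem_Icc] at hm' hn'
  rcases eq_or_ne x m with rfl | hxm
  · exact hm
  rcases eq_or_ne x n with rfl | hxn'
  · exact hn
  have h3 : n = 4 → 3 ∈ S := fun h => h4 (h ▸ hn)
  obtain rfl | rfl : x = 2 ∨ x = 3 := by omega
  · obtain rfl : m = 1 := by omega
    exact h13 hm (by rcases (show n = 3 ∨ n = 4 by omega) with rfl | rfl; exacts [hn, h3 rfl])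
  · exact h3 (by omega)

namespace SimpleGraph

variable {V : Type*} [Fintype V]

section ColorDegree

variable (G : SimpleGraph V) [DecidableRel G.Adj]

def colorDegree (g : Sym2 V → Bool) (b : Bool) (v : V) : ℕ :=
  #{w ∈ G.neighborFinset v | g s(v, w) = b}

variable {G} {g : Sym2 V → Bool} {b : Bool} {v : V}

lemma colorDegree_true_add_false (g : Sym2 V → Bool) (v : V) :
    G.colorDegree g true v + G.colorDegree g false v = G.degree v := by
  simpa [colorDegree] using card_filter_add_card_filter_not (s := G.neighborFinset v)
    (fun w => g s(v, w) = true)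

lemma colorDegree_pos_iff : 0 < G.colorDegree g b v ↔ ∃ w, G.Adj v w ∧ g s(v, w) = b := by
  simp [colorDegree, card_pos, Finset.Nonempty]

lemma ncard_colorClass (g : Sym2 V → Bool) (b : Bool) (v : V) :
    {w | G.Adj v w ∧ g s(v, w) = b}.ncard = G.colorDegree g b v := by
  rw [colorDegree, ← Set.ncard_coe_finset]
  congr 1
  ext w
  simp

variable [DecidableEq V]

lemma colorDegree_update_of_notMem {e : Sym2 V} (c : Bool) (hv : v ∉ e) :
    G.colorDegree (Function.update g e c) b v = G.colorDegree g b v := by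
  refine congrArg card (filter_congr fun w _ => ?_)
  rw [Function.update_of_ne fun h : s(v, w) = e => hv (h ▸ Sym2.mem_mk_left v w)]

lemma colorDegree_update_mk {x y : V} (hxy : G.Adj x y) (c : Bool) :
    G.colorDegree (Function.update g s(x, y) c) b x + (if g s(x, y) = b then 1 else 0) =
      G.colorDegree g b x + (if c = b then 1 else 0) := by
  have hy : y ∈ G.neighborFinset x := (mem_neighborFinset G x y).2 hxy
  simp only [colorDegree, card_filter, ← add_sum_erase _ _ hy, Function.update_self]
  have hrest : ∑ w ∈ (G.neighborFinset x).erase y,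
      (if Function.update g s(x, y) c s(x, w) = b then 1 else 0) =
        ∑ w ∈ (G.neighborFinset x).erase y, (if g s(x, w) = b then 1 else 0) :=
    sum_congr rfl fun w hw => by
      rw [Function.update_of_ne fun h => (ne_of_mem_erase hw) (Sym2.congr_right.1 h)]
  omega

end ColorDegree

section Orientation

variable [DecidableEq V] {G : SimpleGraph V} [DecidableRel G.Adj] {p : V → Bool}
  {g : Sym2 V → Bool}

variable (G) in
/-- A proper 2-coloring `p` turns `g` into an orientation of `G`: the edge `xy` points away from
`x` iff `g s(x, y) = p x`, so the out-degree of `x` is `G.colorDegree g (p x) x`. -/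
def IsArc (p : V → Bool) (g : Sym2 V → Bool) (x y : V) : Prop :=
  G.Adj x y ∧ g s(x, y) = p x

lemma colorDegree_update_arc (hp : ∀ ⦃u v⦄, G.Adj u v → p u ≠ p v) {x y : V}
    (hxy : G.IsArc p g x y) (z : V) :
    G.colorDegree (Function.update g s(x, y) (!g s(x, y))) (p z) z + (if z = x then 1 else 0) =
      G.colorDegree g (p z) z + (if z = y then 1 else 0) := by
  obtain ⟨hadj, hg⟩ := hxy
  have hyx : p y = !p x := Bool.eq_not_iff.2 (hp hadj).symm
  by_cases hzx : z = x
  · subst hzx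
    have := colorDegree_update_mk (g := g) (b := p z) hadj (!g s(z, y))
    simp_all [G.ne_of_adj hadj]
  by_cases hzy : z = y
  · subst hzy
    have := colorDegree_update_mk (g := g) (b := p z) hadj.symm (!g s(x, z))
    rw [Sym2.eq_swap] at this
    simp_all
  rw [colorDegree_update_of_notMem _ (by simp [hzx, hzy])]
  simp [hzx, hzy]

/-- Reversing the arcs of a directed path moves one unit of out-degree from its start to its
end. -/
theorem exists_shift_of_isChain (hp : ∀ ⦃u v⦄, G.Adj u v → p u ≠ p v) :
    ∀ (v : V) (l : List V) (g : Sym2 V → Bool), (v :: l).IsChain (G.IsArc p g) →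
      ∃ g' : Sym2 V → Bool, ∀ z, G.colorDegree g' (p z) z + (if z = v then 1 else 0) =
        G.colorDegree g (p z) z + (if z = (v :: l).getLast (List.cons_ne_nil v l) then 1 else 0)
  | v, [], g, _ => ⟨g, fun _ => rfl⟩
  | v, c :: t, g, hchain => by
    by_cases hv : v ∈ c :: t
    · -- cut off the cycle through `v`
      obtain ⟨s, t', hst⟩ := List.append_of_mem hv
      have hlen : t'.length ≤ t.length := by
        have := congrArg List.length hst
        simp only [List.length_append, List.length_cons] at this
        omega
      have hsuf : (v :: t').IsChain (G.IsArc p g) :=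
        hchain.suffix ⟨v :: s, by rw [hst]; rfl⟩
      obtain ⟨g', hg'⟩ := exists_shift_of_isChain hp v t' g hsuf
      refine ⟨g', fun z => ?_⟩
      rw [hg', List.getLast_cons (List.cons_ne_nil c t)]
      simp only [hst, List.getLast_append_of_ne_nil _ (List.cons_ne_nil v t')]
    · have hvc : G.IsArc p g v c := (List.isChain_cons_cons.1 hchain).1
      have hchain₁ : (c :: t).IsChain (G.IsArc p (Function.update g s(v, c) (!g s(v, c)))) :=
        (List.isChain_cons_cons.1 hchain).2.imp_of_mem_imp fun x y hx hy hxy => by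
          refine ⟨hxy.1, ?_⟩
          rw [Function.update_of_ne]
          · exact hxy.2
          · intro h
            rcases Sym2.mem_iff.1 (h ▸ Sym2.mem_mk_left v c : v ∈ s(x, y)) with rfl | rfl
            exacts [hv hx, hv hy]
      obtain ⟨g₂, hg₂⟩ := exists_shift_of_isChain hp c t _ hchain₁
      refine ⟨g₂, fun z => ?_⟩
      have h₁ := colorDegree_update_arc hp hvc z
      have h₂ := hg₂ z
      rw [List.getLast_cons (List.cons_ne_nil c t)]
      omega
  termination_by _ l => l.length

end Orientation

section Split

variable {G : SimpleGraph V} [DecidableRel G.Adj] {p : V → Bool} {g : Sym2 V → Bool} {a b : ℕ}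

lemma sum_colorDegree_le_sum_degree (hp : ∀ ⦃u v⦄, G.Adj u v → p u ≠ p v) (R : Finset V)
    (hR : ∀ x ∈ R, ∀ y, G.IsArc p g x y → y ∈ R) (s : Bool) :
    ∑ x ∈ R, G.colorDegree g (p x) x ≤ ∑ x ∈ R with p x = s, G.degree x := by
  simp only [colorDegree, ← card_neighborFinset_eq_degree, ← card_sigma]
  -- an arc `xy` inside `R` is counted at whichever of `x`, `y` lies on side `s`
  refine card_le_card_of_injOn (fun q => if p q.1 = s then q else ⟨q.2, q.1⟩) ?_ ?_
  · rintro ⟨x, y⟩ hq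
    simp only [coe_sigma, Set.mem_sigma_iff, mem_coe, mem_filter, mem_neighborFinset] at hq
    by_cases hx : p x = s
    · simp only [if_pos hx, coe_sigma, Set.mem_sigma_iff, mem_coe, mem_filter,
        mem_neighborFinset]
      exact ⟨⟨hq.1, hx⟩, hq.2.1⟩
    · have hy : p y = s := by
        have := hp hq.2.1
        revert hx this; cases p x <;> cases p y <;> cases s <;> simp
      simp only [if_neg hx, coe_sigma, Set.mem_sigma_iff, mem_coe, mem_filter,
        mem_neighborFinset]
      exact ⟨⟨hR x hq.1 y hq.2, hy⟩, hq.2.1.symm⟩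
  · rintro ⟨x, y⟩ hq ⟨x', y'⟩ hq' heq
    simp only [coe_sigma, Set.mem_sigma_iff, mem_coe, mem_filter, mem_neighborFinset] at hq hq'
    by_cases hx : p x = s <;> by_cases hx' : p x' = s <;>
      simp only [hx, hx', if_true, if_false, Sigma.mk.injEq, heq_eq_eq] at heq <;>
      obtain ⟨rfl, rfl⟩ := heq
    · rfl
    · exact absurd (hq.2.2.symm.trans (Sym2.eq_swap ▸ hq'.2.2)) (hp hq.2.1)
    · exact absurd (hq'.2.2.symm.trans (Sym2.eq_swap ▸ hq.2.2)) (hp hq'.2.1)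
    · rfl

lemma exists_sum_degree_le_sum_cond (hdeg : ∀ v, G.degree v ≤ a + b) (R : Finset V) :
    ∃ s, ∑ x ∈ R with p x = s, G.degree x ≤ ∑ x ∈ R, cond (p x) a b := by
  have hside : ∀ s, ∑ x ∈ R with p x = s, G.degree x ≤ #{x ∈ R | p x = s} * (a + b) :=
    fun s => sum_le_card_nsmul _ _ _ fun x _ => hdeg x
  have hcap : ∑ x ∈ R, cond (p x) a b =
      #{x ∈ R | p x = true} * a + #{x ∈ R | p x = false} * b := by
    simp [Bool.cond_eq_ite, sum_ite, mul_comm]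
  rcases le_total #{x ∈ R | p x = true} #{x ∈ R | p x = false} with h | h
  · exact ⟨true, (hside true).trans (by rw [hcap]; nlinarith)⟩
  · exact ⟨false, (hside false).trans (by rw [hcap]; nlinarith)⟩

variable (G) in
def excess (a b : ℕ) (g : Sym2 V → Bool) : ℕ :=
  ∑ v, ((G.colorDegree g true v - a) + (G.colorDegree g false v - b))

variable [DecidableEq V]

lemma excess_lt_of_shift (hdeg : ∀ v, G.degree v ≤ a + b) {g' : Sym2 V → Bool} {u v : V}
    (hshift : ∀ z, G.colorDegree g' (p z) z + (if z = v then 1 else 0) =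
      G.colorDegree g (p z) z + (if z = u then 1 else 0)) (huv : u ≠ v)
    (hv : cond (p v) a b < G.colorDegree g (p v) v)
    (hu : G.colorDegree g (p u) u < cond (p u) a b) :
    G.excess a b g' < G.excess a b g := by
  have key : ∀ z, (G.colorDegree g' true z - a) + (G.colorDegree g' false z - b) +
      (if z = v then 1 else 0) ≤
        (G.colorDegree g true z - a) + (G.colorDegree g false z - b) := by
    intro z
    have h := hshift z
    have h₁ := colorDegree_true_add_false (G := G) g z
    have h₂ := colorDegree_true_add_false (G := G) g' z
    have := hdeg z
    by_cases hzv : z = v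
    · subst hzv
      replace h : G.colorDegree g' (p z) z + 1 = G.colorDegree g (p z) z := by
        simpa [huv.symm] using h
      rw [if_pos rfl]
      cases hpz : p z <;> simp only [hpz, cond_true, cond_false] at h hv <;> omega
    by_cases hzu : z = u
    · subst hzu
      replace h : G.colorDegree g' (p z) z = G.colorDegree g (p z) z + 1 := by
        simpa [hzv] using h
      rw [if_neg hzv]
      cases hpz : p z <;> simp only [hpz, cond_true, cond_false] at h hu <;> omega
    cases hpz : p z <;> simp only [hpz, if_neg hzv, if_neg hzu] at h ⊢ <;> omega
  refine sum_lt_sum (fun z _ => (Nat.le_add_right _ _).trans (key z)) ⟨v, mem_univ v, ?_⟩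
  simpa using key v

theorem colorDegree_self_le_cond (hp : ∀ ⦃u v⦄, G.Adj u v → p u ≠ p v)
    (hdeg : ∀ v, G.degree v ≤ a + b) (hg : ∀ g', G.excess a b g ≤ G.excess a b g') (v : V) :
    G.colorDegree g (p v) v ≤ cond (p v) a b := by
  classical
  by_contra! hv
  let R : Finset V := {u | Relation.ReflTransGen (G.IsArc p g) v u}
  have hR : ∀ x ∈ R, ∀ y, G.IsArc p g x y → y ∈ R := fun x hx y hxy => by
    simpa [R] using (mem_filter.1 hx).2.tail hxy
  have hvR : v ∈ R := by simp [R, Relation.ReflTransGen.refl]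
  obtain ⟨u, huR, hu⟩ : ∃ u ∈ R, G.colorDegree g (p u) u < cond (p u) a b := by
    by_contra! hall
    obtain ⟨s, hs⟩ := exists_sum_degree_le_sum_cond (p := p) hdeg R
    have hlt := sum_lt_sum hall ⟨v, hvR, hv⟩
    have := sum_colorDegree_le_sum_degree hp R hR s
    omega
  obtain ⟨l, hl, hlast⟩ := List.exists_isChain_cons_of_relationReflTransGen (mem_filter.1 huR).2
  obtain ⟨g', hg'⟩ := exists_shift_of_isChain hp v l g hl
  rw [hlast] at hg'
  have huv : u ≠ v := by rintro rfl; omega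
  exact (hg g').not_gt (excess_lt_of_shift hdeg hg' huv hv hu)

theorem exists_colorDegree_le (hp : ∀ ⦃u v⦄, G.Adj u v → p u ≠ p v)
    (hdeg : ∀ v, G.degree v ≤ a + b) :
    ∃ g : Sym2 V → Bool, ∀ v, G.colorDegree g true v ≤ a ∧ G.colorDegree g false v ≤ b := by
  obtain ⟨g, hg⟩ := Finite.exists_min (G.excess a b)
  refine ⟨g, fun v => ?_⟩
  have h₁ := colorDegree_self_le_cond hp hdeg hg v
  have h₂ := colorDegree_self_le_cond (p := fun x => !p x)
    (fun x y h => by simpa using hp h) hdeg hg v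
  cases hpv : p v <;> simp_all

end Split

section FourColoring

variable (H : SimpleGraph V) (g : Sym2 V → Bool)

def SeesOnlyFalse (z : V) : Prop :=
  (∃ w, H.Adj z w) ∧ ∀ w, H.Adj z w → g s(z, w) = false

open Classical in
noncomputable def fourColoring (e : Sym2 V) : ℕ :=
  if e ∈ H.edgeSet then cond (g e) 2 3
  else if ∃ z ∈ e, SeesOnlyFalse H g z then 4 else 1

variable {H g} {G : SimpleGraph V} {k : ℕ} {v w : V}

lemma fourColoring_mk_of_adj (h : H.Adj v w) :
    fourColoring H g s(v, w) = cond (g s(v, w)) 2 3 := by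
  simp [fourColoring, h]

lemma fourColoring_mk_eq_four (h : ¬ H.Adj v w) (hD : ∃ z ∈ s(v, w), SeesOnlyFalse H g z) :
    fourColoring H g s(v, w) = 4 := by
  rw [fourColoring, if_neg (by simpa using h), if_pos hD]

lemma fourColoring_mk_eq_one (h : ¬ H.Adj v w) (hD : ¬ ∃ z ∈ s(v, w), SeesOnlyFalse H g z) :
    fourColoring H g s(v, w) = 1 := by
  rw [fourColoring, if_neg (by simpa using h), if_neg hD]

variable (g) in
lemma adj_iff_fourColoring_mk :
    H.Adj v w ↔ fourColoring H g s(v, w) = 2 ∨ fourColoring H g s(v, w) = 3 := by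
  by_cases h : H.Adj v w
  · simp only [h, fourColoring_mk_of_adj h, true_iff]
    cases g s(v, w) <;> simp
  · by_cases hD : ∃ z ∈ s(v, w), SeesOnlyFalse H g z
    · simp [h, fourColoring_mk_eq_four h hD]
    · simp [h, fourColoring_mk_eq_one h hD]

lemma fourColoring_mk_mem_Icc (v w : V) : fourColoring H g s(v, w) ∈ Set.Icc 1 4 := by
  by_cases h : H.Adj v w
  · rw [fourColoring_mk_of_adj h]
    cases g s(v, w) <;> simp
  · by_cases hD : ∃ z ∈ s(v, w), SeesOnlyFalse H g z
    · simp [fourColoring_mk_eq_four h hD]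
    · simp [fourColoring_mk_eq_one h hD]

lemma adj_of_fourColoring_mk_eq_cond {b : Bool} (h : fourColoring H g s(v, w) = cond b 2 3) :
    H.Adj v w ∧ g s(v, w) = b := by
  have hH : H.Adj v w := (adj_iff_fourColoring_mk g).2 (by cases b <;> simp [h])
  refine ⟨hH, ?_⟩
  rw [fourColoring_mk_of_adj hH] at h
  revert h
  cases g s(v, w) <;> cases b <;> simp

lemma mem_colorSpectrum_fourColoring_cond (hHG : H ≤ G) (v : V) (b : Bool) :
    cond b 2 3 ∈ G.colorSpectrum (fourColoring H g) v ↔ ∃ w, H.Adj v w ∧ g s(v, w) = b :=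
  ⟨fun ⟨w, _, hc⟩ => ⟨w, adj_of_fourColoring_mk_eq_cond hc⟩,
    fun ⟨w, hH, hb⟩ => ⟨w, hHG hH, hb ▸ fourColoring_mk_of_adj hH⟩⟩

variable [DecidableRel H.Adj]

lemma exists_adj_of_lt_degree (hg : ∀ b, H.colorDegree g b v ≤ k) (hv : k < H.degree v)
    (b : Bool) : ∃ w, H.Adj v w ∧ g s(v, w) = b := by
  have := colorDegree_true_add_false (G := H) g v
  have := hg true
  have := hg false
  exact colorDegree_pos_iff.1 (by cases b <;> omega)

lemma three_mem_of_four_mem (hHG : H ≤ G)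
    (hcover : ∀ v w, G.Adj v w → ¬ H.Adj v w → k < H.degree v ∨ k < H.degree w)
    (hg : ∀ v b, H.colorDegree g b v ≤ k) (h4 : 4 ∈ G.colorSpectrum (fourColoring H g) v) :
    3 ∈ G.colorSpectrum (fourColoring H g) v := by
  obtain ⟨w, hvw, hc⟩ := h4
  have hH : ¬ H.Adj v w := fun hH => by have := (adj_iff_fourColoring_mk g).1 hH; omega
  obtain ⟨z, hz, ⟨x, hx⟩, hfalse⟩ : ∃ z ∈ s(v, w), SeesOnlyFalse H g z := by
    by_contra hD
    rw [fourColoring_mk_eq_one hH hD] at hc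
    omega
  refine (mem_colorSpectrum_fourColoring_cond hHG v false).2 ?_
  rcases Sym2.mem_iff.1 hz with rfl | rfl
  · exact ⟨x, hx, hfalse x hx⟩
  · rcases hcover v z hvw hH with hv | hz
    · exact exists_adj_of_lt_degree (hg v) hv false
    · obtain ⟨y, hy, hyt⟩ := exists_adj_of_lt_degree (hg z) hz true
      simp [hfalse y hy] at hyt

lemma two_mem_of_one_mem (hHG : H ≤ G) (h1 : 1 ∈ G.colorSpectrum (fourColoring H g) v)
    (h3 : 3 ∈ G.colorSpectrum (fourColoring H g) v) :
    2 ∈ G.colorSpectrum (fourColoring H g) v := by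
  obtain ⟨w, -, hc⟩ := h1
  have hH : ¬ H.Adj v w := fun hH => by have := (adj_iff_fourColoring_mk g).1 hH; omega
  have hD : ¬ ∃ z ∈ s(v, w), SeesOnlyFalse H g z := fun hD => by
    rw [fourColoring_mk_eq_four hH hD] at hc
    omega
  obtain ⟨x, hx, -⟩ := (mem_colorSpectrum_fourColoring_cond (g := g) hHG v false).1 h3
  refine (mem_colorSpectrum_fourColoring_cond hHG v true).2 ?_
  by_contra! hnone
  exact hD ⟨v, Sym2.mem_mk_left v w, ⟨x, hx⟩, fun y hy => by simpa using hnone y hy⟩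

lemma ncard_fourColoring_class_le (hrest : ∀ v, {w | G.Adj v w ∧ ¬ H.Adj v w}.ncard ≤ k)
    (hg : ∀ v b, H.colorDegree g b v ≤ k) (v : V) (n : ℕ) :
    {w | G.Adj v w ∧ fourColoring H g s(v, w) = n}.ncard ≤ k := by
  by_cases hn : n = 2 ∨ n = 3
  · obtain ⟨b, rfl⟩ : ∃ b, n = cond b 2 3 := by
      rcases hn with rfl | rfl
      exacts [⟨true, rfl⟩, ⟨false, rfl⟩]
    refine (Set.ncard_le_ncard ?_ (Set.toFinite _)).trans
      ((ncard_colorClass (G := H) g b v).trans_le (hg v b))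
    exact fun w ⟨_, hc⟩ => adj_of_fourColoring_mk_eq_cond hc
  · refine (Set.ncard_le_ncard ?_ (Set.toFinite _)).trans (hrest v)
    rintro w ⟨hvw, rfl⟩
    exact ⟨hvw, fun hH => hn ((adj_iff_fourColoring_mk g).1 hH)⟩

theorem isImproperIntervalColoring_fourColoring (hHG : H ≤ G)
    (hrest : ∀ v, {w | G.Adj v w ∧ ¬ H.Adj v w}.ncard ≤ k)
    (hcover : ∀ v w, G.Adj v w → ¬ H.Adj v w → k < H.degree v ∨ k < H.degree w)
    (hg : ∀ v b, H.colorDegree g b v ≤ k) :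
    G.IsImproperIntervalColoring (fourColoring H g) k := by
  refine ⟨ncard_fourColoring_class_le hrest hg, fun v => isIntervalSet_of_subset_Icc ?_
    (three_mem_of_four_mem hHG hcover hg) (two_mem_of_one_mem hHG)⟩
  rintro n ⟨w, -, rfl⟩
  exact fourColoring_mk_mem_Icc v w

end FourColoring

theorem exists_isImproperIntervalColoring {G : SimpleGraph V} [DecidableRel G.Adj]
    {p : V → Bool} (hp : ∀ ⦃u v⦄, G.Adj u v → p u ≠ p v) {k : ℕ} (hdeg : ∀ v, G.degree v ≤ 3 * k) :
    ∃ c, G.IsImproperIntervalColoring c k := by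
  classical
  obtain ⟨g₁, hg₁⟩ := exists_colorDegree_le hp (a := k) (b := 2 * k) fun v => by
    linarith [hdeg v]
  let H := G.deleteEdges {e | g₁ e = true ∧ ∃ z ∈ e, 2 * k < G.degree z}
  have hHG : H ≤ G := deleteEdges_le _
  have hhigh : ∀ v, 2 * k < G.degree v → H.degree v = G.colorDegree g₁ false v := by
    intro v hv
    rw [← card_neighborFinset_eq_degree, colorDegree]
    congr 1
    ext w
    simp [H, not_le.2 hv]
  have hHdeg : ∀ v, H.degree v ≤ k + k := by
    intro v
    by_cases hv : 2 * k < G.degree v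
    · rw [hhigh v hv]; linarith [hg₁ v]
    · linarith [degree_le_of_le (v := v) hHG]
  obtain ⟨g₂, hg₂⟩ := exists_colorDegree_le (fun u v h => hp (hHG h)) hHdeg
  refine ⟨fourColoring H g₂, isImproperIntervalColoring_fourColoring hHG (fun v => ?_)
    (fun v w hvw hH => ?_) (fun v b => by cases b; exacts [(hg₂ v).2, (hg₂ v).1])⟩
  · refine (Set.ncard_le_ncard ?_ (Set.toFinite _)).trans
      ((ncard_colorClass g₁ true v).trans_le (hg₁ v).1)
    rintro w ⟨hvw, hH⟩
    simp only [H, deleteEdges_adj, hvw, true_and, not_not, Set.mem_ofPred_eq] at hH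
    exact ⟨hvw, hH.1⟩
  · simp only [H, deleteEdges_adj, hvw, true_and, not_not, Set.mem_ofPred_eq] at hH
    obtain ⟨-, z, hz, hdz⟩ := hH
    have hkz : k < H.degree z := by
      have := colorDegree_true_add_false (G := G) g₁ z
      rw [hhigh z hdz]; linarith [(hg₁ z).1]
    rcases Sym2.mem_iff.1 hz with rfl | rfl
    exacts [Or.inl hkz, Or.inr hkz]

end SimpleGraph

theorem statement9_general {V : Type*} [Fintype V] (G : SimpleGraph V) [DecidableRel G.Adj]
    (hbip : G.Colorable 2) :
    G.muInt ≤ (G.maxDegree + 2) / 3 := by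
  classical
  obtain ⟨C⟩ := hbip
  obtain ⟨c, hc⟩ := exists_isImproperIntervalColoring (p := finTwoEquiv ∘ C)
    (fun u v h => finTwoEquiv.injective.ne (C.valid h)) (k := (G.maxDegree + 2) / 3)
    fun v => by have := G.degree_le_maxDegree v; omega
  exact Nat.sInf_le ⟨c, hc⟩

/-- If `G` is bipartite with at least one edge, then `μ_int(G) ≤ ⌈Δ(G)/3⌉`. -/
theorem statement9 {V : Type*} [Fintype V] (G : SimpleGraph V) [DecidableRel G.Adj]
    (hbip : G.Colorable 2) (hE : G.edgeSet.Nonempty) :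
    G.muInt ≤ (G.maxDegree + 2) / 3 :=
  statement9_general G hbip
end
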